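/- arXiv:1408.1058 — 4 statements merged into one kernel-verified Lean document; each statement's English description precedes it below -/
import Mathlib

section
/- Let n be a positive integer with n ≡ 4 (mod 8) and 3 ∤ n. Then (n^2 − 8n)/8 ≤ R(3, Z_n, 2) ≤ (n^2 − 8n)/8 + 2, where R(3, Z_n, 2) is the minimum number of monochromatic 3-term arithmetic progressions over all 2-colorings of Z_n. -/
/-- The set of 3-term arithmetic progressions in `ZMod n`, as 3-element sets
`{a, a+b, a+2b}` with `b ≠ 0` and all elements distinct, each counted once. -/
def apSets (n : ℕ) [NeZero n] : Finset (Finset (ZMod n)) :=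
  Finset.univ.filter (fun s =>
    (∃ a b : ZMod n, b ≠ 0 ∧ s = {a, a + b, a + 2 * b}) ∧ s.card = 3)

/-- The number of monochromatic 3-term APs in `ZMod n` under the 2-coloring `χ`. -/
def monoAPCount (n : ℕ) [NeZero n] (χ : ZMod n → Fin 2) : ℕ :=
  ((apSets n).filter (fun s => ∀ x ∈ s, ∀ y ∈ s, χ x = χ y)).card

open Finset

namespace Stmt15Aux

set_option linter.unusedSectionVars false
set_option linter.unusedVariables false
set_option linter.unusedTactic false

def pmv : Fin 2 → ℤ := fun c => if c = 0 then 1 else -1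

lemma pmv_sq (c : Fin 2) : pmv c * pmv c = 1 := by fin_cases c <;> decide

lemma pmv_mul_le (u v : Fin 2) : pmv u * pmv v ≤ 1 := by
  fin_cases u <;> fin_cases v <;> decide

lemma ind_eq (u v w : Fin 2) :
    (if (u = v ∧ u = w) then (4:ℤ) else 0)
      = 1 + pmv u * pmv v + pmv u * pmv w + pmv v * pmv w := by
  fin_cases u <;> fin_cases v <;> fin_cases w <;> decide

variable {n : ℕ} [NeZero n]

lemma cast_val_eq (b : ZMod n) : ((b.val : ℕ) : ZMod n) = b := by
  simp [ZMod.natCast_val, ZMod.cast_id]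

lemma two_mul_hh (hn2 : 2 ∣ n) : (2 : ZMod n) * ((n/2 : ℕ) : ZMod n) = 0 := by
  rw [show ((2:ZMod n)) = ((2:ℕ):ZMod n) by push_cast; ring, ← Nat.cast_mul,
    Nat.mul_div_cancel' hn2, ZMod.natCast_self]

lemma hh_ne_zero (hn4 : 4 ≤ n) : ((n/2 : ℕ) : ZMod n) ≠ 0 := by
  rw [Ne, ZMod.natCast_eq_zero_iff]
  intro h
  have h1 : n / 2 ≠ 0 := by omega
  have := Nat.le_of_dvd (Nat.pos_of_ne_zero h1) h
  omega

lemma two_mul_eq_zero_iff (hn2 : 2 ∣ n) (b : ZMod n) :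
    2 * b = 0 ↔ b = 0 ∨ b = ((n/2 : ℕ) : ZMod n) := by
  constructor
  · intro h
    rw [← cast_val_eq b, show ((2:ZMod n)) = ((2:ℕ):ZMod n) by push_cast; ring,
      ← Nat.cast_mul, ZMod.natCast_eq_zero_iff] at h
    obtain ⟨k, hk⟩ := h
    have hv : b.val < n := ZMod.val_lt b
    have hk2 : k < 2 := by nlinarith
    interval_cases k
    · left
      rw [← cast_val_eq b]
      have : b.val = 0 := by omega
      simp [this]
    · right
      rw [← cast_val_eq b]
      have : b.val = n / 2 := by omega
      rw [this]
  · rintro (rfl | rfl)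
    · ring
    · exact two_mul_hh hn2

lemma val_add_mod_two (hn2 : 2 ∣ n) (a b : ZMod n) :
    (a + b).val % 2 = (a.val + b.val) % 2 := by
  rw [ZMod.val_add, Nat.mod_mod_of_dvd _ hn2]

lemma two_mul_val_even (hn2 : 2 ∣ n) (b : ZMod n) : (2 * b).val % 2 = 0 := by
  rw [two_mul, val_add_mod_two hn2]
  omega

lemma doubling_fiber (hn2 : 2 ∣ n) (hn4 : 4 ≤ n) (c : ZMod n) :
    ((univ : Finset (ZMod n)).filter (fun b => 2*b = c)).card
      = if c.val % 2 = 0 then 2 else 0 := by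
  by_cases hc : c.val % 2 = 0
  · rw [if_pos hc]
    have hc2 : c.val = 2 * (c.val / 2) := by omega
    have hb0 : 2 * ((c.val / 2 : ℕ) : ZMod n) = c := by
      rw [show ((2:ZMod n)) = ((2:ℕ):ZMod n) by push_cast; ring, ← Nat.cast_mul, ← hc2,
        cast_val_eq]
    have hfe : (univ : Finset (ZMod n)).filter (fun b => 2*b = c)
        = {((c.val / 2 : ℕ) : ZMod n), ((c.val / 2 : ℕ) : ZMod n) + ((n/2 : ℕ) : ZMod n)} := by
      ext b
      simp only [mem_filter, mem_univ, true_and, mem_insert, mem_singleton]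
      constructor
      · intro h
        have h0 : 2 * (b - ((c.val / 2 : ℕ) : ZMod n)) = 0 := by
          rw [mul_sub, hb0, h, sub_self]
        rcases (two_mul_eq_zero_iff hn2 _).1 h0 with h' | h'
        · left; linear_combination h'
        · right; linear_combination h'
      · rintro (rfl | rfl)
        · exact hb0
        · rw [mul_add, hb0, two_mul_hh hn2, add_zero]
    rw [hfe]
    refine Finset.card_pair ?_
    intro h
    exact hh_ne_zero hn4 (by linear_combination -h)
  · rw [if_neg hc, Finset.card_eq_zero, Finset.filter_eq_empty_iff]
    intro b _ h
    exact hc (h ▸ two_mul_val_even hn2 b)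

/-- parity-class sum -/
def Tc (f : ZMod n → ℤ) (c : ℕ) : ℤ := ∑ y ∈ univ.filter (fun y : ZMod n => y.val % 2 = c), f y

lemma inner_double (hn2 : 2 ∣ n) (hn4 : 4 ≤ n) (f : ZMod n → ℤ) (a : ZMod n) :
    ∑ b : ZMod n, f (a + 2*b) = 2 * Tc f (a.val % 2) := by
  have step1 : ∀ b : ZMod n, f (a + 2*b) = ∑ y : ZMod n, if y = a + 2*b then f y else 0 := by
    intro b
    rw [Finset.sum_ite_eq' univ (a + 2*b) f]
    simp
  calc ∑ b : ZMod n, f (a + 2*b)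
      = ∑ b : ZMod n, ∑ y : ZMod n, if y = a + 2*b then f y else 0 := by
        exact Finset.sum_congr rfl fun b _ => step1 b
    _ = ∑ y : ZMod n, ∑ b : ZMod n, if y = a + 2*b then f y else 0 := Finset.sum_comm
    _ = ∑ y : ZMod n, (if y.val % 2 = a.val % 2 then (2:ℤ) else 0) * f y := by
        refine Finset.sum_congr rfl fun y _ => ?_
        rw [Finset.sum_ite, Finset.sum_const_zero, Finset.sum_const, add_zero]
        have hfc : (univ.filter (fun b : ZMod n => y = a + 2*b)) =
            (univ.filter (fun b : ZMod n => 2*b = y - a)) := by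
          apply Finset.filter_congr
          intro b _
          constructor
          · intro h; rw [h]; ring
          · intro h; linear_combination -h
        rw [hfc, doubling_fiber hn2 hn4]
        have hy : y.val % 2 = (a.val + (y-a).val) % 2 := by
          conv_lhs => rw [show y = a + (y - a) by ring]
          rw [val_add_mod_two hn2]
        by_cases hc : (y - a).val % 2 = 0
        · rw [if_pos hc, if_pos (by omega)]; push_cast; ring
        · rw [if_neg hc, if_neg (by omega)]; simp
    _ = ∑ y : ZMod n, (if y.val % 2 = a.val % 2 then (2:ℤ) * f y else 0) := by
        refine Finset.sum_congr rfl fun y _ => ?_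
        split_ifs <;> ring
    _ = 2 * Tc f (a.val % 2) := by
        rw [Tc, Finset.mul_sum, Finset.sum_filter]

lemma shift_sum (f : ZMod n → ℤ) (a : ZMod n) : ∑ b : ZMod n, f (a + b) = ∑ x : ZMod n, f x :=
  Equiv.sum_comp (Equiv.addLeft a) f

lemma F1_full (f : ZMod n → ℤ) :
    ∑ b : ZMod n, ∑ a : ZMod n, f a * f (a + b) = (∑ x : ZMod n, f x) ^ 2 := by
  rw [Finset.sum_comm]
  have : ∀ a : ZMod n, ∑ b : ZMod n, f a * f (a + b) = f a * ∑ x : ZMod n, f x := by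
    intro a
    rw [← Finset.mul_sum, shift_sum]
  rw [Finset.sum_congr rfl fun a _ => this a, ← Finset.sum_mul]
  ring

lemma F3_eq_F1 (f : ZMod n → ℤ) (b : ZMod n) :
    ∑ a : ZMod n, f (a + b) * f (a + 2*b) = ∑ a : ZMod n, f a * f (a + b) := by
  have : ∀ a : ZMod n, f (a + b) * f (a + 2*b) = (fun y => f y * f (y + b)) (a + b) := by
    intro a; simp only []; ring_nf
  rw [Finset.sum_congr rfl fun a _ => this a]
  exact Equiv.sum_comp (Equiv.addRight b) (fun y => f y * f (y + b))

lemma F2_full (hn2 : 2 ∣ n) (hn4 : 4 ≤ n) (f : ZMod n → ℤ) :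
    ∑ b : ZMod n, ∑ a : ZMod n, f a * f (a + 2*b) = 2 * ((Tc f 0)^2 + (Tc f 1)^2) := by
  rw [Finset.sum_comm]
  have step : ∀ a : ZMod n, ∑ b : ZMod n, f a * f (a + 2*b) = f a * (2 * Tc f (a.val % 2)) := by
    intro a
    rw [← Finset.mul_sum, inner_double hn2 hn4]
  rw [Finset.sum_congr rfl fun a _ => step a]
  have hmaps : ∀ a : ZMod n, a ∈ (univ : Finset (ZMod n)) → a.val % 2 ∈ ({0,1} : Finset ℕ) := by
    intro a _; simp only [mem_insert, mem_singleton]; omega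
  rw [← Finset.sum_fiberwise_of_maps_to hmaps (fun a => f a * (2 * Tc f (a.val % 2)))]
  have inner : ∀ c ∈ ({0,1} : Finset ℕ),
      ∑ a ∈ univ.filter (fun a : ZMod n => a.val % 2 = c), f a * (2 * Tc f (a.val % 2))
        = Tc f c * (2 * Tc f c) := by
    intro c _
    rw [Finset.sum_congr rfl (fun a ha => by
      rw [(Finset.mem_filter.1 ha).2]), ← Finset.sum_mul]
    rfl
  rw [Finset.sum_congr rfl inner, Finset.sum_pair (by norm_num : (0:ℕ) ≠ 1)]
  ring

/-- ordered monochromatic AP pairs -/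
def Pm (n : ℕ) [NeZero n] (χ : ZMod n → Fin 2) : Finset (ZMod n × ZMod n) :=
  (univ ×ˢ (univ \ {0, ((n/2:ℕ):ZMod n)})).filter
    (fun p => χ p.1 = χ (p.1+p.2) ∧ χ p.1 = χ (p.1+2*p.2))

lemma master (hn2 : 2 ∣ n) (hn4 : 4 ≤ n) (χ : ZMod n → Fin 2) :
    4 * ((Pm n χ).card : ℤ)
      = (n:ℤ) * ((n:ℤ)-2)
        + 2*((∑ x : ZMod n, pmv (χ x))^2 - n
             - ∑ x : ZMod n, pmv (χ x) * pmv (χ (x + ((n/2:ℕ):ZMod n))))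
        + (2*((Tc (fun x => pmv (χ x)) 0)^2 + (Tc (fun x => pmv (χ x)) 1)^2) - 2*n) := by
  classical
  set f : ZMod n → ℤ := fun x => pmv (χ x) with hf
  set hh : ZMod n := ((n/2:ℕ):ZMod n) with hhh
  set B : Finset (ZMod n) := univ \ ({0, hh} : Finset (ZMod n)) with hB
  have h0h : (0 : ZMod n) ≠ hh := fun h => hh_ne_zero hn4 h.symm
  have hcu : (univ : Finset (ZMod n)).card = n := by rw [Finset.card_univ, ZMod.card]
  have hBcard : B.card = n - 2 := by
    rw [hB, Finset.card_sdiff_of_subset (Finset.subset_univ _), Finset.card_pair h0h, hcu]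
  have hsum1 : ∀ (m : Finset (ZMod n)), ∑ _a ∈ m, (1:ℤ) = m.card := by
    intro m; rw [Finset.sum_const, nsmul_eq_mul, mul_one]
  have hfsq : ∀ x, f x * f x = 1 := fun x => pmv_sq (χ x)
  have hA : 4 * ((Pm n χ).card : ℤ)
      = ∑ p ∈ univ ×ˢ B, (if χ p.1 = χ (p.1+p.2) ∧ χ p.1 = χ (p.1+2*p.2) then (4:ℤ) else 0) := by
    rw [Pm, ← Finset.sum_filter, Finset.sum_const, nsmul_eq_mul]; ring
  have hBstep : ∑ p ∈ univ ×ˢ B, (if χ p.1 = χ (p.1+p.2) ∧ χ p.1 = χ (p.1+2*p.2) then (4:ℤ) else 0)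
      = ∑ b ∈ B, ∑ a : ZMod n, (1 + f a * f (a+b) + f a * f (a+2*b) + f (a+b) * f (a+2*b)) := by
    rw [Finset.sum_product' (f := fun a b => if χ a = χ (a+b) ∧ χ a = χ (a+2*b) then (4:ℤ) else 0),
      Finset.sum_comm]
    exact Finset.sum_congr rfl fun b _ => Finset.sum_congr rfl fun a _ =>
      ind_eq (χ a) (χ (a+b)) (χ (a+2*b))
  have hsplit : ∀ b : ZMod n,
      ∑ a : ZMod n, (1 + f a * f (a+b) + f a * f (a+2*b) + f (a+b) * f (a+2*b))
        = (n:ℤ) + (∑ a : ZMod n, f a * f (a+b)) + (∑ a : ZMod n, f a * f (a+2*b))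
          + (∑ a : ZMod n, f a * f (a+b)) := by
    intro b
    simp only [Finset.sum_add_distrib]
    rw [hsum1, hcu, F3_eq_F1 f b]
  have hBsum : ∀ g : ZMod n → ℤ, ∑ b ∈ B, g b = (∑ b : ZMod n, g b) - (g 0 + g hh) := by
    intro g
    rw [hB, Finset.sum_sdiff_eq_sub (Finset.subset_univ _), Finset.sum_pair h0h]
  have hF1zero : ∑ a : ZMod n, f a * f (a + (0:ZMod n)) = (n:ℤ) := by
    simp only [add_zero]
    rw [Finset.sum_congr rfl fun a _ => hfsq a, hsum1, hcu]
  have hF2zero : ∑ a : ZMod n, f a * f (a + 2*(0:ZMod n)) = (n:ℤ) := by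
    simp only [mul_zero, add_zero]
    rw [Finset.sum_congr rfl fun a _ => hfsq a, hsum1, hcu]
  have hF2hh : ∑ a : ZMod n, f a * f (a + 2*hh) = (n:ℤ) := by
    rw [hhh, two_mul_hh hn2]
    simp only [add_zero]
    rw [Finset.sum_congr rfl fun a _ => hfsq a, hsum1, hcu]
  rw [hA, hBstep, Finset.sum_congr rfl fun b _ => hsplit b]
  simp only [Finset.sum_add_distrib]
  have hcast : ((n - 2 : ℕ) : ℤ) = (n:ℤ) - 2 := by omega
  have e0 : ∑ _x ∈ B, (n:ℤ) = ((n:ℤ) - 2) * n := by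
    rw [Finset.sum_const, hBcard, nsmul_eq_mul, hcast]
  have e1 : ∑ x ∈ B, ∑ a : ZMod n, f a * f (a + x)
      = (∑ x : ZMod n, f x)^2 - ((n:ℤ) + ∑ a : ZMod n, f a * f (a + hh)) := by
    have h := hBsum (fun b => ∑ a : ZMod n, f a * f (a + b))
    rw [h, F1_full f, hF1zero]
  have e2 : ∑ x ∈ B, ∑ a : ZMod n, f a * f (a + 2*x)
      = 2 * ((Tc f 0)^2 + (Tc f 1)^2) - ((n:ℤ) + (n:ℤ)) := by
    have h := hBsum (fun b => ∑ a : ZMod n, f a * f (a + 2*b))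
    rw [h, F2_full hn2 hn4 f, hF2zero, hF2hh]
  rw [e0, e1, e2]
  simp only [hf]
  ring

lemma mem_Pm_iff (χ : ZMod n → Fin 2) (p : ZMod n × ZMod n) :
    p ∈ Pm n χ ↔ (p.2 ≠ 0 ∧ p.2 ≠ ((n/2:ℕ):ZMod n))
      ∧ (χ p.1 = χ (p.1+p.2) ∧ χ p.1 = χ (p.1+2*p.2)) := by
  simp [Pm, mem_filter, mem_product, mem_sdiff, and_assoc, not_or]

lemma card_triple (a b : ZMod n) (hb : b ≠ 0) (h2b : 2*b ≠ 0) :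
    ({a, a + b, a + 2*b} : Finset (ZMod n)).card = 3 := by
  have d1 : a ≠ a + b := by intro h; exact hb (by linear_combination -h)
  have d2 : a ≠ a + 2*b := by intro h; exact h2b (by linear_combination -h)
  have d3 : a + b ≠ a + 2*b := by intro h; exact hb (by linear_combination -h)
  rw [Finset.card_insert_of_notMem (by simp [d1, d2]),
    Finset.card_insert_of_notMem (by simp [d3]), Finset.card_singleton]

lemma two_b_ne (a b : ZMod n) (hcard : ({a, a + b, a + 2*b} : Finset (ZMod n)).card = 3) :
    2 * b ≠ 0 := by
  intro h
  have h2 : a + 2*b = a := by rw [h, add_zero]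
  have hsub : ({a, a + b, a + 2*b} : Finset (ZMod n)) ⊆ {a, a+b} := by
    intro x hx
    simp only [mem_insert, mem_singleton] at hx ⊢
    rcases hx with rfl | rfl | rfl
    · left; rfl
    · right; rfl
    · left; exact h2
  have := Finset.card_le_card hsub
  have h2' : ({a, a+b} : Finset (ZMod n)).card ≤ 2 :=
    le_trans (Finset.card_insert_le _ _) (by simp)
  omega

lemma sum_triple (a b : ZMod n) (hb : b ≠ 0) (h2b : 2*b ≠ 0) :
    ∑ x ∈ ({a, a + b, a + 2*b} : Finset (ZMod n)), x = 3*(a+b) := by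
  have d1 : a ≠ a + b := by intro h; exact hb (by linear_combination -h)
  have d2 : a ≠ a + 2*b := by intro h; exact h2b (by linear_combination -h)
  have d3 : a + b ≠ a + 2*b := by intro h; exact hb (by linear_combination -h)
  rw [Finset.sum_insert (by simp [d1, d2]), Finset.sum_insert (by simp [d3]),
    Finset.sum_singleton]
  ring

lemma count_eq (hn2 : 2 ∣ n) (hn4 : 4 ≤ n) (h3 : ¬ (3 ∣ n)) (χ : ZMod n → Fin 2) :
    (Pm n χ).card = 2 * monoAPCount n χ := by
  classical
  have h3u : IsUnit (3 : ZMod n) := by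
    rw [show ((3:ZMod n)) = ((3:ℕ):ZMod n) by push_cast; ring, ZMod.isUnit_iff_coprime]
    exact (Nat.Prime.coprime_iff_not_dvd Nat.prime_three).mpr h3
  set M : Finset (Finset (ZMod n)) :=
    (apSets n).filter (fun s => ∀ x ∈ s, ∀ y ∈ s, χ x = χ y) with hM
  have hmaps : ∀ p ∈ Pm n χ, ({p.1, p.1 + p.2, p.1 + 2*p.2} : Finset (ZMod n)) ∈ M := by
    rintro ⟨a, b⟩ hp
    rw [mem_Pm_iff] at hp
    obtain ⟨⟨hb0, hbh⟩, hχ1, hχ2⟩ := hp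
    have h2b : 2*b ≠ 0 := by
      intro h; rcases (two_mul_eq_zero_iff hn2 b).1 h with h' | h' <;> [exact hb0 h'; exact hbh h']
    have hcard := card_triple a b hb0 h2b
    rw [hM, Finset.mem_filter]
    constructor
    · rw [apSets, Finset.mem_filter]
      exact ⟨Finset.mem_univ _, ⟨a, b, hb0, rfl⟩, hcard⟩
    · have key : ∀ x ∈ ({a, a + b, a + 2*b} : Finset (ZMod n)), χ x = χ a := by
        intro x hx
        simp only [mem_insert, mem_singleton] at hx
        rcases hx with rfl | rfl | rfl
        · rfl
        · exact hχ1.symm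
        · exact hχ2.symm
      intro x hx y hy
      rw [key x hx, key y hy]
  have hfib : ∀ s ∈ M, ((Pm n χ).filter
      (fun p => ({p.1, p.1 + p.2, p.1 + 2*p.2} : Finset (ZMod n)) = s)).card = 2 := by
    intro s hs
    rw [hM, Finset.mem_filter, apSets, Finset.mem_filter] at hs
    obtain ⟨⟨-, ⟨a, b, hb0, rfl⟩, hcard⟩, hmono⟩ := hs
    have h2b : 2*b ≠ 0 := two_b_ne a b hcard
    have hbh : b ≠ ((n/2:ℕ):ZMod n) := by
      intro h; exact h2b ((two_mul_eq_zero_iff hn2 b).2 (Or.inr h))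
    have hnb0 : -b ≠ 0 := by simpa using hb0
    have hnbh : -b ≠ ((n/2:ℕ):ZMod n) := by
      intro h
      apply h2b
      have : 2 * (-b) = 0 := (two_mul_eq_zero_iff hn2 (-b)).2 (Or.inr h)
      linear_combination -this
    have hmem1 : a ∈ ({a, a + b, a + 2*b} : Finset (ZMod n)) := by simp
    have hmem2 : a + b ∈ ({a, a + b, a + 2*b} : Finset (ZMod n)) := by simp
    have hmem3 : a + 2*b ∈ ({a, a + b, a + 2*b} : Finset (ZMod n)) := by simp
    have hset2 : ({a + 2*b, a + 2*b + -b, a + 2*b + 2*(-b)} : Finset (ZMod n))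
        = ({a, a + b, a + 2*b} : Finset (ZMod n)) := by
      have e1 : a + 2*b + -b = a + b := by ring
      have e2 : a + 2*b + 2*(-b) = a := by ring
      rw [e1, e2]
      ext x
      simp only [mem_insert, mem_singleton]
      tauto
    have hfeq : (Pm n χ).filter
        (fun p => ({p.1, p.1 + p.2, p.1 + 2*p.2} : Finset (ZMod n)) = {a, a + b, a + 2*b})
        = {(a, b), (a + 2*b, -b)} := by
      ext ⟨a', b'⟩
      simp only [Finset.mem_filter, mem_Pm_iff, mem_insert, mem_singleton, Prod.mk.injEq]
      constructor
      · rintro ⟨⟨⟨hb'0, hb'h⟩, -, -⟩, hseteq⟩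
        have h2b' : 2*b' ≠ 0 := by
          intro h; rcases (two_mul_eq_zero_iff hn2 b').1 h with h' | h' <;>
            [exact hb'0 h'; exact hb'h h']
        have hsum : 3*(a' + b') = 3*(a + b) := by
          rw [← sum_triple a' b' hb'0 h2b', ← sum_triple a b hb0 h2b, hseteq]
        have hmid : a' + b' = a + b := h3u.mul_left_cancel hsum
        have ha' : a' ∈ ({a, a + b, a + 2*b} : Finset (ZMod n)) := by
          rw [← hseteq]; simp
        simp only [mem_insert, mem_singleton] at ha'
        rcases ha' with rfl | rfl | rfl
        · left; exact ⟨rfl, by linear_combination hmid⟩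
        · exfalso; exact hb'0 (by linear_combination hmid)
        · right; exact ⟨rfl, by linear_combination hmid⟩
      · rintro (⟨rfl, rfl⟩ | ⟨rfl, rfl⟩)
        · exact ⟨⟨⟨hb0, hbh⟩, hmono _ hmem1 _ hmem2, hmono _ hmem1 _ hmem3⟩, rfl⟩
        · refine ⟨⟨⟨hnb0, hnbh⟩, ?_, ?_⟩, hset2⟩
          · have e1 : a + 2*b + -b = a + b := by ring
            rw [e1]; exact hmono _ hmem3 _ hmem2
          · have e2 : a + 2*b + 2*(-b) = a := by ring
            rw [e2]; exact hmono _ hmem3 _ hmem1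
    rw [hfeq]
    refine Finset.card_pair ?_
    intro h
    have : b = -b := congrArg Prod.snd h
    exact h2b (by linear_combination this)
  rw [Finset.card_eq_sum_card_fiberwise hmaps, Finset.sum_congr rfl hfib,
    Finset.sum_const, smul_eq_mul, mul_comm]
  rfl

lemma sum_range_mod (F : ℕ → ℤ) (p c : ℕ) :
    ∑ k ∈ range (c*p), F (k % p) = c * ∑ j ∈ range p, F j := by
  induction c with
  | zero => simp
  | succ c ih =>
    have h1 : (c+1)*p = c*p + p := by ring
    rw [h1, Finset.range_eq_Ico, ← Finset.sum_Ico_consecutive _ (Nat.zero_le (c*p))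
      (by omega : c*p ≤ c*p + p), ← Finset.range_eq_Ico, ih,
      Finset.sum_Ico_eq_sum_range]
    have h2 : c*p + p - c*p = p := by omega
    rw [h2]
    have h3 : ∀ i ∈ range p, F ((c*p + i) % p) = F i := by
      intro i hi
      rw [mem_range] at hi
      have : (c*p + i) % p = i := by
        rw [Nat.add_comm, Nat.mul_comm c p, Nat.add_mul_mod_self_left, Nat.mod_eq_of_lt hi]
      rw [this]
    rw [Finset.sum_congr rfl h3]
    push_cast
    ring

lemma sum_zmod (F : ZMod n → ℤ) : ∑ x : ZMod n, F x = ∑ k ∈ range n, F ((k:ℕ) : ZMod n) := by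
  apply Finset.sum_nbij' (i := fun (x : ZMod n) => x.val) (j := fun (k : ℕ) => ((k:ℕ) : ZMod n))
  · intro a _; exact mem_range.2 (ZMod.val_lt a)
  · intro k _; exact mem_univ _
  · intro a _; simp [ZMod.natCast_val, ZMod.cast_id]
  · intro k hk; exact ZMod.val_cast_of_lt (mem_range.1 hk)
  · intro a _; simp [ZMod.natCast_val, ZMod.cast_id]

/-- the extremal coloring -/
def chi0 (n : ℕ) [NeZero n] : ZMod n → Fin 2 :=
  fun x => if (x.val % (n/2)) % 4 = 0 ∨ (x.val % (n/2)) % 4 = 3 then 0 else 1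

lemma pmv_chi0 (x : ZMod n) :
    pmv (chi0 n x) = if (x.val % (n/2)) % 4 = 0 ∨ (x.val % (n/2)) % 4 = 3 then (1:ℤ) else -1 := by
  rw [chi0]
  split_ifs <;> rfl

lemma chi0_period (h8 : n % 8 = 4) (x : ZMod n) :
    chi0 n (x + ((n/2:ℕ):ZMod n)) = chi0 n x := by
  have hlt : n / 2 < n := by omega
  have hval : (x + ((n/2:ℕ):ZMod n)).val % (n/2) = x.val % (n/2) := by
    rw [ZMod.val_add, ZMod.val_cast_of_lt hlt, Nat.mod_mod_of_dvd _ (⟨2, by omega⟩ : n/2 ∣ n),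
      Nat.add_mod_right]
  rw [chi0, chi0, hval]

lemma C0_eq (h8 : n % 8 = 4) :
    ∑ x : ZMod n, pmv (chi0 n x) * pmv (chi0 n (x + ((n/2:ℕ):ZMod n))) = (n:ℤ) := by
  have : ∀ x : ZMod n, pmv (chi0 n x) * pmv (chi0 n (x + ((n/2:ℕ):ZMod n))) = 1 := by
    intro x
    rw [chi0_period h8, pmv_chi0]
    split_ifs <;> norm_num
  rw [Finset.sum_congr rfl fun x _ => this x, Finset.sum_const, nsmul_eq_mul,
    Finset.card_univ, ZMod.card, mul_one]

/-- the period-4 pattern -/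
def G (c j : ℕ) : ℤ := if j % 2 = c then (if j % 4 = 0 ∨ j % 4 = 3 then 1 else -1) else 0

lemma G_mod4 (c j : ℕ) : G c (j % 4) = G c j := by
  have e1 : j % 4 % 2 = j % 2 := Nat.mod_mod_of_dvd j (by norm_num)
  have e2 : j % 4 % 4 = j % 4 := Nat.mod_mod_of_dvd j dvd_rfl ▸ (Nat.mod_mod_of_dvd _ dvd_rfl)
  rw [G, G, e1, e2]

lemma G_sum_period (c : ℕ) : ∑ j ∈ range 4, G c j = 0 := by
  rw [show (4:ℕ) = 3+1 from rfl, Finset.sum_range_succ, Finset.sum_range_succ,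
    Finset.sum_range_succ, Finset.sum_range_one]
  by_cases hc0 : c = 0
  · subst hc0; decide
  · by_cases hc1 : c = 1
    · subst hc1; decide
    · have : ∀ j, G c j = 0 := by
        intro j
        rw [G]
        have : ¬ (j % 2 = c) := by omega
        rw [if_neg this]
      simp [this]

lemma G_range_sum (h8 : n % 8 = 4) (c : ℕ) :
    ∑ j ∈ range (n/2), G c j = G c 0 + G c 1 := by
  obtain ⟨m, hm⟩ : ∃ m, n = 8*m + 4 := ⟨n/8, by omega⟩
  have hp : n/2 = 4*m + 2 := by omega
  rw [hp, show 4*m+2 = (4*m+1)+1 from rfl, Finset.sum_range_succ,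
    show 4*m+1 = (4*m)+1 from rfl, Finset.sum_range_succ,
    show (4*m : ℕ) = m*4 from by ring]
  have hs : ∑ j ∈ range (m*4), G c j = 0 := by
    have : ∑ j ∈ range (m*4), G c j = ∑ j ∈ range (m*4), G c (j % 4) := by
      exact Finset.sum_congr rfl fun j _ => (G_mod4 c j).symm
    rw [this, sum_range_mod (G c) 4 m, G_sum_period, mul_zero]
  rw [hs]
  have h1 : G c (m*4) = G c 0 := by rw [← G_mod4 c (m*4), Nat.mul_mod_left]
  have h2 : G c (m*4+1) = G c 1 := by
    rw [← G_mod4 c (m*4+1), Nat.add_comm, Nat.add_mul_mod_self_right]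
  rw [h1, h2]
  ring

lemma Tc_chi0 (h8 : n % 8 = 4) (c : ℕ) (hc : c < 2) :
    Tc (fun x => pmv (chi0 n x)) c = 2 * (G c 0 + G c 1) := by
  have hn2 : 2 ∣ n := by omega
  rw [Tc, Finset.sum_filter]
  rw [sum_zmod (fun y => if y.val % 2 = c then pmv (chi0 n y) else 0)]
  have hcong : ∀ k ∈ range n, (if ((k:ℕ) : ZMod n).val % 2 = c then pmv (chi0 n ((k:ℕ) : ZMod n)) else 0)
      = G c (k % (n/2)) := by
    intro k hk
    have hkn : k < n := mem_range.1 hk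
    have hval : ((k:ℕ) : ZMod n).val = k := ZMod.val_cast_of_lt hkn
    rw [pmv_chi0, hval, G]
    have hpar : k % (n/2) % 2 = k % 2 := Nat.mod_mod_of_dvd k (by omega : 2 ∣ n/2)
    rw [hpar]
  rw [Finset.sum_congr rfl hcong]
  have hn2h : n = 2 * (n/2) := by omega
  rw [show (range n) = range (2*(n/2)) from by rw [← hn2h]]
  rw [sum_range_mod (G c) (n/2) 2, G_range_sum h8 c]
  norm_num

lemma S_eq_T01 (f : ZMod n → ℤ) : ∑ x : ZMod n, f x = Tc f 0 + Tc f 1 := by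
  rw [Tc, Tc, ← Finset.sum_filter_add_sum_filter_not univ (fun y : ZMod n => y.val % 2 = 0) f]
  congr 1
  apply Finset.sum_congr _ (fun _ _ => rfl)
  apply Finset.filter_congr
  intro x _
  omega

end Stmt15Aux

open Stmt15Aux in
theorem stmt_15 (n : ℕ) [NeZero n] (h8 : n % 8 = 4) (h3 : ¬ (3 ∣ n)) :
    (∀ χ : ZMod n → Fin 2,
        ((n : ℤ) ^ 2 - 8 * n) / 8 ≤ (monoAPCount n χ : ℤ)) ∧
      (∃ χ : ZMod n → Fin 2,
        (monoAPCount n χ : ℤ) ≤ ((n : ℤ) ^ 2 - 8 * n) / 8 + 2) := by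
  have hn2 : 2 ∣ n := by omega
  have hn4 : 4 ≤ n := by omega
  obtain ⟨m, hmn⟩ : ∃ m:ℕ, n = 8*m+4 := ⟨n/8, by omega⟩
  have hfac : (n:ℤ)^2 - 8*(n:ℤ) = 8*(8*(m:ℤ)^2 - 2) := by
    rw [hmn]; push_cast; ring
  have hdiv : ((n : ℤ) ^ 2 - 8 * n) / 8 = 8*(m:ℤ)^2 - 2 := by
    rw [hfac, Int.mul_ediv_cancel_left _ (by norm_num)]
  constructor
  · intro χ
    have hmaster := master hn2 hn4 χ
    have hcount := count_eq hn2 hn4 h3 χ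
    have hC : ∑ x : ZMod n, pmv (χ x) * pmv (χ (x + ((n/2:ℕ):ZMod n))) ≤ (n:ℤ) := by
      calc ∑ x : ZMod n, pmv (χ x) * pmv (χ (x + ((n/2:ℕ):ZMod n)))
          ≤ ∑ _x : ZMod n, (1:ℤ) :=
            Finset.sum_le_sum (fun x _ => pmv_mul_le (χ x) (χ (x + ((n/2:ℕ):ZMod n))))
        _ = (n:ℤ) := by
            rw [Finset.sum_const, nsmul_eq_mul, Finset.card_univ, ZMod.card, mul_one]
    have hS := sq_nonneg (∑ x : ZMod n, pmv (χ x))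
    have hT0 := sq_nonneg (Tc (fun x => pmv (χ x)) 0)
    have hT1 := sq_nonneg (Tc (fun x => pmv (χ x)) 1)
    have hcc : (8 : ℤ) * (monoAPCount n χ : ℤ) = 4 * ((Pm n χ).card : ℤ) := by
      rw [hcount]; push_cast; ring
    have key : (n:ℤ)^2 - 8*(n:ℤ) ≤ 8 * (monoAPCount n χ : ℤ) := by
      rw [hcc, hmaster]; nlinarith [hC, hS, hT0, hT1]
    rw [hdiv]
    rw [hfac] at key
    linarith
  · refine ⟨chi0 n, ?_⟩
    have hmaster := master hn2 hn4 (chi0 n)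
    have hcount := count_eq hn2 hn4 h3 (chi0 n)
    have hT0 : Tc (fun x => pmv (chi0 n x)) 0 = 2 := by
      rw [Tc_chi0 h8 0 (by norm_num)]
      norm_num [G]
    have hT1 : Tc (fun x => pmv (chi0 n x)) 1 = -2 := by
      rw [Tc_chi0 h8 1 (by norm_num)]
      norm_num [G]
    have hS : ∑ x : ZMod n, pmv (chi0 n x) = 0 := by
      rw [S_eq_T01, hT0, hT1]; ring
    have hC := C0_eq (n := n) h8
    have hcc : (8 : ℤ) * (monoAPCount n (chi0 n) : ℤ) = 4 * ((Pm n (chi0 n)).card : ℤ) := by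
      rw [hcount]; push_cast; ring
    have key : 8 * (monoAPCount n (chi0 n) : ℤ) = (n:ℤ)^2 - 8*(n:ℤ) + 16 := by
      rw [hcc, hmaster, hS, hC, hT0, hT1]; ring
    rw [hdiv]
    rw [hfac] at key
    linarith
end

section
/- Let n be an odd positive integer divisible by 3. Then n^2/8 − 7n/6 + 3/8 ≤ R(3, Z_n, 2) ≤ n^2/8 − 7n/6 + 27/8, where R(3, Z_n, 2) is the minimum number of monochromatic 3-term arithmetic progressions over all 2-colorings of Z_n. -/
open Finset
set_option linter.unusedSectionVars false
set_option maxHeartbeats 1000000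

section Helpers
variable {n : ℕ} [NeZero n]

lemma two_unit (hodd : Odd n) : IsUnit (2 : ZMod n) := by
  have := (ZMod.isUnit_iff_coprime 2 n).mpr (hodd.coprime_two_left)
  simpa using this

lemma two_mul_ne (hodd : Odd n) {b : ZMod n} (hb : b ≠ 0) : 2 * b ≠ 0 := by
  intro h
  exact hb (by simpa [h] using ((two_unit hodd).mul_right_eq_zero (b := b)).mp h)

lemma card3 (hodd : Odd n) (a : ZMod n) {b : ZMod n} (hb : b ≠ 0) :
    ({a, a + b, a + 2 * b} : Finset (ZMod n)).card = 3 := by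
  have h1 : a ≠ a + b := by
    intro h; exact hb (by linear_combination -h)
  have h2 : a ≠ a + 2 * b := by
    intro h; exact two_mul_ne hodd hb (by linear_combination -h)
  have h3 : a + b ≠ a + 2 * b := by
    intro h; exact hb (by linear_combination -h)
  rw [Finset.card_insert_of_notMem (by simp [h1, h2]),
    Finset.card_insert_of_notMem (by simp [h3]), Finset.card_singleton]

lemma sum3 (hodd : Odd n) (a : ZMod n) {b : ZMod n} (hb : b ≠ 0) :
    ∑ x ∈ ({a, a + b, a + 2 * b} : Finset (ZMod n)), x = 3 * a + 3 * b := by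
  have h1 : a ≠ a + b := by
    intro h; exact hb (by linear_combination -h)
  have h2 : a ≠ a + 2 * b := by
    intro h; exact two_mul_ne hodd hb (by linear_combination -h)
  have h3 : a + b ≠ a + 2 * b := by
    intro h; exact hb (by linear_combination -h)
  rw [Finset.sum_insert (by simp [h1, h2]), Finset.sum_insert (by simp [h3]),
    Finset.sum_singleton]
  ring

/-- fiber description for generic APs -/
lemma generic_fiber (hodd : Odd n) {a b a' b' : ZMod n} (hb : b ≠ 0) (h3b : 3 * b ≠ 0)
    (hb' : b' ≠ 0)
    (hS : ({a', a' + b', a' + 2 * b'} : Finset (ZMod n)) = {a, a + b, a + 2 * b}) :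
    (a' = a ∧ b' = b) ∨ (a' = a + 2 * b ∧ b' = -b) := by
  have hsum : 3 * a' + 3 * b' = 3 * a + 3 * b := by
    rw [← sum3 hodd a' hb', ← sum3 hodd a hb, hS]
  have hm : a' + b' ∈ ({a, a + b, a + 2 * b} : Finset (ZMod n)) := by
    rw [← hS]; simp
  have ha' : a' ∈ ({a, a + b, a + 2 * b} : Finset (ZMod n)) := by
    rw [← hS]; simp
  simp only [Finset.mem_insert, Finset.mem_singleton] at hm ha'
  rcases hm with hm | hm | hm
  · exact absurd (by linear_combination 3 * hm - hsum) h3b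
  · rcases ha' with h | h | h
    · exact Or.inl ⟨h, by linear_combination hm - h⟩
    · exact absurd (by linear_combination hm - h) hb'
    · exact Or.inr ⟨h, by linear_combination hm - h⟩
  · exact absurd (by linear_combination hsum - 3 * hm) h3b

lemma mirror_set (a b : ZMod n) :
    ({a + 2 * b, a + 2 * b + -b, a + 2 * b + 2 * -b} : Finset (ZMod n))
      = {a, a + b, a + 2 * b} := by
  rw [show a + 2 * b + -b = a + b by ring, show a + 2 * b + 2 * -b = a by ring]
  ext x; simp; tauto

/-- fiber description for coset APs, forward -/
lemma coset_fiber_fwd {a b a' b' : ZMod n} (h3b : 3 * b = 0) (hb' : b' ≠ 0)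
    (hS : ({a', a' + b', a' + 2 * b'} : Finset (ZMod n)) = {a, a + b, a + 2 * b}) :
    a' ∈ ({a, a + b, a + 2 * b} : Finset (ZMod n)) ∧ (b' = b ∨ b' = 2 * b) := by
  have ha' : a' ∈ ({a, a + b, a + 2 * b} : Finset (ZMod n)) := by rw [← hS]; simp
  refine ⟨ha', ?_⟩
  have hm : a' + b' ∈ ({a, a + b, a + 2 * b} : Finset (ZMod n)) := by rw [← hS]; simp
  simp only [Finset.mem_insert, Finset.mem_singleton] at hm ha'
  rcases ha' with h | h | h <;> rcases hm with hm | hm | hm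
  · exact absurd (by linear_combination hm - h) hb'
  · exact Or.inl (by linear_combination hm - h)
  · exact Or.inr (by linear_combination hm - h)
  · exact Or.inr (by linear_combination hm - h - h3b)
  · exact absurd (by linear_combination hm - h) hb'
  · exact Or.inl (by linear_combination hm - h)
  · exact Or.inl (by linear_combination hm - h - h3b)
  · exact Or.inr (by linear_combination hm - h - h3b)
  · exact absurd (by linear_combination hm - h) hb'

/-- fiber description for coset APs, backward -/
lemma coset_fiber_bwd {a b a' b' : ZMod n} (h3b : 3 * b = 0)
    (ha' : a' ∈ ({a, a + b, a + 2 * b} : Finset (ZMod n))) (hb' : b' = b ∨ b' = 2 * b) :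
    ({a', a' + b', a' + 2 * b'} : Finset (ZMod n)) = {a, a + b, a + 2 * b} := by
  simp only [Finset.mem_insert, Finset.mem_singleton] at ha'
  rcases ha' with h | h | h <;> rcases hb' with h' | h' <;> rw [h, h']
  · rw [show a + 2 * (2 * b) = a + b by linear_combination h3b]
    ext x; simp; tauto
  · rw [show a + b + b = a + 2 * b by ring, show a + b + 2 * b = a by linear_combination h3b]
    ext x; simp; tauto
  · rw [show a + b + 2 * b = a by linear_combination h3b,
      show a + b + 2 * (2 * b) = a + 2 * b by linear_combination h3b]
    ext x; simp; tauto
  · rw [show a + 2 * b + b = a by linear_combination h3b,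
      show a + 2 * b + 2 * b = a + b by linear_combination h3b]
    ext x; simp; tauto
  · rw [show a + 2 * b + 2 * b = a + b by linear_combination h3b,
      show a + 2 * b + 2 * (2 * b) = a by linear_combination 2 * h3b]
    ext x; simp; tauto

end Helpers
section Defs
variable {n : ℕ} [NeZero n]

def fset (p : ZMod n × ZMod n) : Finset (ZMod n) := {p.1, p.1 + p.2, p.1 + 2 * p.2}

def monoP (χ : ZMod n → Fin 2) (p : ZMod n × ZMod n) : Prop :=
  χ p.1 = χ (p.1 + p.2) ∧ χ p.1 = χ (p.1 + 2 * p.2)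

instance (χ : ZMod n → Fin 2) (p : ZMod n × ZMod n) : Decidable (monoP χ p) := by
  unfold monoP; infer_instance

lemma monoP_iff (χ : ZMod n → Fin 2) (p : ZMod n × ZMod n) :
    monoP χ p ↔ ∀ x ∈ fset p, ∀ y ∈ fset p, χ x = χ y := by
  constructor
  · rintro ⟨h1, h2⟩ x hx y hy
    simp only [fset, mem_insert, mem_singleton] at hx hy
    rcases hx with rfl | rfl | rfl <;> rcases hy with rfl | rfl | rfl <;>
      simp [← h1, ← h2]
  · intro h
    exact ⟨h _ (by simp [fset]) _ (by simp [fset]), h _ (by simp [fset]) _ (by simp [fset])⟩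

def Qall (n : ℕ) [NeZero n] (χ : ZMod n → Fin 2) : Finset (ZMod n × ZMod n) :=
  univ.filter (fun p => p.2 ≠ 0 ∧ monoP χ p)

def Qc (n : ℕ) [NeZero n] (χ : ZMod n → Fin 2) : Finset (ZMod n × ZMod n) :=
  univ.filter (fun p => p.2 ≠ 0 ∧ 3 * p.2 = 0 ∧ monoP χ p)

def Qg (n : ℕ) [NeZero n] (χ : ZMod n → Fin 2) : Finset (ZMod n × ZMod n) :=
  univ.filter (fun p => p.2 ≠ 0 ∧ 3 * p.2 ≠ 0 ∧ monoP χ p)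

lemma Qall_split (χ : ZMod n → Fin 2) : (Qall n χ).card = (Qg n χ).card + (Qc n χ).card := by
  have h1 : (Qall n χ).filter (fun p => 3 * p.2 ≠ 0) = Qg n χ := by
    ext p; simp [Qall, Qg]; tauto
  have h2 : (Qall n χ).filter (fun p => ¬ 3 * p.2 ≠ 0) = Qc n χ := by
    ext p; simp [Qall, Qc]; tauto
  rw [← h1, ← h2, Finset.card_filter_add_card_filter_not]

end Defs

section Count
variable {n : ℕ} [NeZero n]

lemma Qg_card (hodd : Odd n) (χ : ZMod n → Fin 2) :
    (Qg n χ).card = 2 * ((Qg n χ).image fset).card := by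
  rw [Finset.card_eq_sum_card_image fset (Qg n χ)]
  have key : ∀ s ∈ (Qg n χ).image fset, ((Qg n χ).filter (fun q => fset q = s)).card = 2 := by
    intro s hs
    obtain ⟨p, hp, rfl⟩ := Finset.mem_image.mp hs
    simp only [Qg, mem_filter, mem_univ, true_and] at hp
    obtain ⟨hp2, hp3, hpm⟩ := hp
    have hfib : (Qg n χ).filter (fun q => fset q = fset p)
        = {p, (p.1 + 2 * p.2, -p.2)} := by
      ext q
      simp only [Qg, mem_filter, mem_univ, true_and, mem_insert, mem_singleton]
      constructor
      · rintro ⟨⟨hq2, hq3, hqm⟩, hfq⟩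
        rcases generic_fiber hodd hp2 hp3 hq2 hfq with ⟨h1, h2⟩ | ⟨h1, h2⟩
        · exact Or.inl (Prod.ext h1 h2)
        · exact Or.inr (Prod.ext h1 h2)
      · rintro (rfl | rfl)
        · exact ⟨⟨hp2, hp3, hpm⟩, rfl⟩
        · have hfq : fset ((p.1 + 2 * p.2, -p.2) : ZMod n × ZMod n) = fset p :=
            mirror_set p.1 p.2
          refine ⟨⟨neg_ne_zero.mpr hp2, ?_, ?_⟩, hfq⟩
          · intro h; exact hp3 (by linear_combination -h)
          · rw [monoP_iff, hfq]; exact (monoP_iff χ p).mp hpm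
    rw [hfib]
    rw [Finset.card_insert_of_notMem, Finset.card_singleton]
    simp only [mem_singleton]
    intro h
    have : p.2 = -p.2 := congrArg Prod.snd h
    exact two_mul_ne hodd hp2 (by linear_combination this)
  rw [Finset.sum_congr rfl key, Finset.sum_const, smul_eq_mul, mul_comm]

lemma Qc_card (hodd : Odd n) (χ : ZMod n → Fin 2) :
    (Qc n χ).card = 6 * ((Qc n χ).image fset).card := by
  rw [Finset.card_eq_sum_card_image fset (Qc n χ)]
  have key : ∀ s ∈ (Qc n χ).image fset, ((Qc n χ).filter (fun q => fset q = s)).card = 6 := by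
    intro s hs
    obtain ⟨p, hp, rfl⟩ := Finset.mem_image.mp hs
    simp only [Qc, mem_filter, mem_univ, true_and] at hp
    obtain ⟨hp2, hp3, hpm⟩ := hp
    have hfib : (Qc n χ).filter (fun q => fset q = fset p)
        = (fset p) ×ˢ ({p.2, 2 * p.2} : Finset (ZMod n)) := by
      ext q
      simp only [Qc, mem_filter, mem_univ, true_and, Finset.mem_product, mem_insert,
        mem_singleton]
      constructor
      · rintro ⟨⟨hq2, _, _⟩, hfq⟩
        exact coset_fiber_fwd hp3 hq2 hfq
      · rintro ⟨hq1, hq2⟩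
        have hfq : fset q = fset p := coset_fiber_bwd hp3 hq1 hq2
        have hq2ne : q.2 ≠ 0 := by
          rcases hq2 with h | h
          · rw [h]; exact hp2
          · rw [h]; exact two_mul_ne hodd hp2
        have h3q : 3 * q.2 = 0 := by
          rcases hq2 with h | h
          · rw [h]; exact hp3
          · rw [h]; linear_combination 2 * hp3
        refine ⟨⟨hq2ne, h3q, ?_⟩, hfq⟩
        rw [monoP_iff, hfq]; exact (monoP_iff χ p).mp hpm
    rw [hfib, Finset.card_product]
    have hc3 : (fset p).card = 3 := card3 hodd p.1 hp2
    rw [hc3, Finset.card_pair (by intro h; exact hp2 (by linear_combination -h))]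
  rw [Finset.sum_congr rfl key, Finset.sum_const, smul_eq_mul, mul_comm]

end Count

section Count2
variable {n : ℕ} [NeZero n]

lemma monoSets_eq (hodd : Odd n) (χ : ZMod n → Fin 2) :
    (apSets n).filter (fun s => ∀ x ∈ s, ∀ y ∈ s, χ x = χ y)
      = (Qg n χ).image fset ∪ (Qc n χ).image fset := by
  ext s
  simp only [apSets, mem_filter, mem_univ, true_and, mem_union, mem_image, Qg, Qc]
  constructor
  · rintro ⟨⟨⟨a, b, hb, rfl⟩, hcard⟩, hmono⟩
    have hm : monoP χ (a, b) := (monoP_iff χ (a, b)).mpr hmono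
    by_cases h3 : 3 * b = 0
    · exact Or.inr ⟨(a, b), by simp [hb, h3, hm], rfl⟩
    · exact Or.inl ⟨(a, b), by simp [hb, h3, hm], rfl⟩
  · rintro (⟨p, ⟨hp2, _, hpm⟩, rfl⟩ | ⟨p, ⟨hp2, _, hpm⟩, rfl⟩) <;>
      exact ⟨⟨⟨p.1, p.2, hp2, rfl⟩, card3 hodd p.1 hp2⟩, (monoP_iff χ p).mp hpm⟩

lemma images_disjoint (χ : ZMod n → Fin 2) :
    Disjoint ((Qg n χ).image fset) ((Qc n χ).image fset) := by
  rw [Finset.disjoint_left]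
  rintro s hs1 hs2
  obtain ⟨p, hp, rfl⟩ := Finset.mem_image.mp hs1
  obtain ⟨q, hq, hfq⟩ := Finset.mem_image.mp hs2
  simp only [Qg, Qc, mem_filter, mem_univ, true_and] at hp hq
  obtain ⟨hp2, hp3, -⟩ := hp
  obtain ⟨hq2, hq3, -⟩ := hq
  have := (coset_fiber_fwd (a := q.1) (b := q.2) (a' := p.1) (b' := p.2) hq3 hp2
    (by exact hfq.symm)).2
  rcases this with h | h
  · exact hp3 (by rw [h]; exact hq3)
  · exact hp3 (by rw [h]; linear_combination 2 * hq3)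

lemma monoAPCount_eq (hodd : Odd n) (χ : ZMod n → Fin 2) :
    monoAPCount n χ = ((Qg n χ).image fset).card + ((Qc n χ).image fset).card := by
  rw [monoAPCount, monoSets_eq hodd χ, Finset.card_union_of_disjoint (images_disjoint χ)]

lemma master_count (hodd : Odd n) (χ : ZMod n → Fin 2) :
    6 * monoAPCount n χ + 2 * (Qc n χ).card = 3 * (Qall n χ).card := by
  rw [monoAPCount_eq hodd, Qall_split, Qg_card hodd, Qc_card hodd]
  ring

end Count2

section Alg2
variable {n : ℕ} [NeZero n]

noncomputable def ind (χ : ZMod n → Fin 2) (x : ZMod n) : ℚ := if χ x = 0 then 1 else 0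

lemma Mtotal_eq (hodd : Odd n) (χ : ZMod n → Fin 2) :
    ((univ.filter (fun p : ZMod n × ZMod n => monoP χ p)).card : ℚ)
      = n ^ 2 - 3 * n * ((univ.filter (fun x => χ x = 0)).card : ℚ)
        + 3 * ((univ.filter (fun x => χ x = 0)).card : ℚ) ^ 2 := by
  set α : ℚ := ((univ.filter (fun x : ZMod n => χ x = 0)).card : ℚ) with hα
  have hA : ∑ x : ZMod n, ind χ x = α := by
    rw [hα, ← Finset.sum_boole]; rfl
  have hcard : ((univ : Finset (ZMod n)).card : ℚ) = n := by
    rw [Finset.card_univ, ZMod.card]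
  have h0 : ∀ a : ZMod n, ∑ b : ZMod n, ind χ (a + b) = α := by
    intro a; rw [← hA]
    exact Fintype.sum_equiv (Equiv.addLeft a) _ _ (fun b => rfl)
  have hbij : Function.Bijective (fun b : ZMod n => (2 : ZMod n) * b) := by
    refine Finite.injective_iff_bijective.mp ?_
    intro b1 b2 h
    exact (two_unit hodd).mul_left_cancel h
  have h2 : ∀ a : ZMod n, ∑ b : ZMod n, ind χ (a + 2 * b) = α := by
    intro a; rw [← h0 a]
    exact Fintype.sum_bijective _ hbij _ _ (fun b => rfl)
  have h3 : ∑ b : ZMod n, ∑ a : ZMod n, ind χ (a + b) * ind χ (a + 2 * b) = α ^ 2 := by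
    have step : ∀ b : ZMod n, ∑ a : ZMod n, ind χ (a + b) * ind χ (a + 2 * b)
        = ∑ x : ZMod n, ind χ x * ind χ (x + b) := by
      intro b
      refine Fintype.sum_equiv (Equiv.addRight b) _ _ (fun a => ?_)
      simp only [Equiv.coe_addRight]
      rw [show a + 2 * b = (a + b) + b by ring]
    rw [Finset.sum_congr rfl (fun b _ => step b), Finset.sum_comm]
    have : ∀ x : ZMod n, ∑ b : ZMod n, ind χ x * ind χ (x + b) = ind χ x * α := by
      intro x; rw [← Finset.mul_sum, h0 x]
    rw [Finset.sum_congr rfl (fun x _ => this x), ← Finset.sum_mul, hA, sq]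
  have pointwise : ∀ p : ZMod n × ZMod n,
      (if monoP χ p then (1 : ℚ) else 0)
        = 1 - ind χ p.1 - ind χ (p.1 + p.2) - ind χ (p.1 + 2 * p.2)
          + ind χ p.1 * ind χ (p.1 + p.2) + ind χ p.1 * ind χ (p.1 + 2 * p.2)
          + ind χ (p.1 + p.2) * ind χ (p.1 + 2 * p.2) := by
    intro p
    have h01 : ∀ i : Fin 2, i = 0 ∨ i = 1 := by decide
    rcases h01 (χ p.1) with hx | hx <;> rcases h01 (χ (p.1 + p.2)) with hy | hy <;>
      rcases h01 (χ (p.1 + 2 * p.2)) with hz | hz <;>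
      simp [monoP, ind, hx, hy, hz]
  rw [← Finset.sum_boole, Fintype.sum_prod_type]
  rw [Finset.sum_congr rfl (fun a _ => Finset.sum_congr rfl (fun b _ => pointwise (a, b)))]
  have split : ∀ a : ZMod n, ∑ b : ZMod n,
      (1 - ind χ a - ind χ (a + b) - ind χ (a + 2 * b)
        + ind χ a * ind χ (a + b) + ind χ a * ind χ (a + 2 * b)
        + ind χ (a + b) * ind χ (a + 2 * b))
      = (n : ℚ) - n * ind χ a - α - α + ind χ a * α + ind χ a * α
        + ∑ b : ZMod n, ind χ (a + b) * ind χ (a + 2 * b) := by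
    intro a
    simp only [Finset.sum_add_distrib, Finset.sum_sub_distrib, Finset.sum_const,
      nsmul_eq_mul, mul_one, ← Finset.mul_sum, h0 a, h2 a, hcard]
  rw [Finset.sum_congr rfl (fun a _ => split a)]
  simp only [Finset.sum_add_distrib, Finset.sum_sub_distrib, Finset.sum_const,
    nsmul_eq_mul, ← Finset.mul_sum, ← Finset.sum_mul, hA, hcard, Finset.sum_comm
      (f := fun a b => ind χ (a + b) * ind χ (a + 2 * b)), h3]
  ring

lemma total_split (χ : ZMod n → Fin 2) :
    (univ.filter (fun p : ZMod n × ZMod n => monoP χ p)).card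
      = ((univ.filter (fun p : ZMod n × ZMod n => p.2 ≠ 0 ∧ monoP χ p)).card) + n := by
  have h1 : (univ.filter (fun p : ZMod n × ZMod n => monoP χ p)).filter (fun p => p.2 ≠ 0)
      = univ.filter (fun p : ZMod n × ZMod n => p.2 ≠ 0 ∧ monoP χ p) := by
    ext p; simp; tauto
  have h2 : (univ.filter (fun p : ZMod n × ZMod n => monoP χ p)).filter (fun p => ¬ p.2 ≠ 0)
      = (univ : Finset (ZMod n)) ×ˢ ({0} : Finset (ZMod n)) := by
    ext p
    simp only [mem_filter, mem_univ, true_and, not_not, Finset.mem_product, mem_singleton]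
    constructor
    · rintro ⟨-, h⟩; exact h
    · intro h
      refine ⟨?_, h⟩
      constructor
      · exact congrArg χ (show p.1 = p.1 + p.2 by rw [h, add_zero])
      · have : p.1 = p.1 + 2 * p.2 := by rw [h]; ring
        exact congrArg χ this
  have h3 : ((univ : Finset (ZMod n)) ×ˢ ({0} : Finset (ZMod n))).card = n := by
    rw [Finset.card_product, Finset.card_singleton, mul_one, Finset.card_univ, ZMod.card]
  have key := Finset.card_filter_add_card_filter_not
    (s := univ.filter (fun p : ZMod n × ZMod n => monoP χ p))
    (p := fun p : ZMod n × ZMod n => p.2 ≠ 0)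
  rw [h1, h2, h3] at key
  omega


lemma torsion_eq (h3 : 3 ∣ n) :
    (univ.filter (fun b : ZMod n => 3 * b = 0 ∧ b ≠ 0))
      = {((n / 3 : ℕ) : ZMod n), 2 * ((n / 3 : ℕ) : ZMod n)} := by
  obtain ⟨m, hm⟩ := h3
  have hn0 : n ≠ 0 := NeZero.ne n
  have hm0 : m ≠ 0 := by omega
  have hdiv : n / 3 = m := by omega
  rw [hdiv]
  have hcast : ∀ j : ℕ, ((m * j : ℕ) : ZMod n) = (j : ZMod n) * (m : ZMod n) := by
    intro j; push_cast; ring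
  have hmz : 3 * ((m : ℕ) : ZMod n) = 0 := by
    have : ((3 * m : ℕ) : ZMod n) = 0 := by
      rw [← hm]; exact ZMod.natCast_self n
    push_cast at this; linear_combination this
  have hmne : ((m : ℕ) : ZMod n) ≠ 0 := by
    rw [Ne, ZMod.natCast_eq_zero_iff]
    intro hdvd
    have := Nat.le_of_dvd (by omega) hdvd
    omega
  have h2mne : 2 * ((m : ℕ) : ZMod n) ≠ 0 := by
    have : ((2 * m : ℕ) : ZMod n) ≠ 0 := by
      rw [Ne, ZMod.natCast_eq_zero_iff]
      intro hdvd
      have := Nat.le_of_dvd (by omega) hdvd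
      omega
    push_cast at this
    intro h; exact this (by linear_combination h)
  ext b
  simp only [mem_filter, mem_univ, true_and, mem_insert, mem_singleton]
  constructor
  · rintro ⟨h3b, hb⟩
    have hbv : ((b.val : ℕ) : ZMod n) = b := by rw [ZMod.natCast_val, ZMod.cast_id]
    have h3v : ((3 * b.val : ℕ) : ZMod n) = 0 := by push_cast [hbv]; linear_combination h3b
    rw [ZMod.natCast_eq_zero_iff] at h3v
    obtain ⟨c, hc⟩ := h3v
    have hk : b.val = m * c := Nat.eq_of_mul_eq_mul_left (by norm_num : 0 < 3)
      (by rw [hc, hm]; ring)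
    set k := c
    have hbvlt : b.val < n := ZMod.val_lt b
    have hklt : k < 3 := by
      by_contra hge
      push_neg at hge
      have : 3 * m ≤ m * k := by
        calc 3 * m = m * 3 := by ring
        _ ≤ m * k := Nat.mul_le_mul_left m hge
      omega
    interval_cases k
    · exfalso; apply hb; rw [← hbv, hk]; simp
    · left; rw [← hbv, hk]; simp
    · right; rw [← hbv, hk, hcast 2]; push_cast; ring
  · rintro (rfl | rfl)
    · exact ⟨hmz, hmne⟩
    · exact ⟨by linear_combination 2 * hmz, h2mne⟩

lemma torsion_card (h3 : 3 ∣ n) :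
    (univ.filter (fun b : ZMod n => 3 * b = 0 ∧ b ≠ 0)).card = 2 := by
  rw [torsion_eq h3]
  rw [Finset.card_pair]
  intro h
  obtain ⟨m, hm⟩ := h3
  have hn0 : n ≠ 0 := NeZero.ne n
  have hdiv : n / 3 = m := by omega
  rw [hdiv] at h
  have hmne : ((m : ℕ) : ZMod n) ≠ 0 := by
    rw [Ne, ZMod.natCast_eq_zero_iff]
    intro hdvd
    have := Nat.le_of_dvd (by omega) hdvd
    omega
  exact hmne (by linear_combination -h)


end Alg2

section QcBounds
variable {n : ℕ} [NeZero n]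

lemma Qc_le (χ : ZMod n → Fin 2) (h3 : 3 ∣ n) : (Qc n χ).card ≤ 2 * n := by
  have hsub : Qc n χ ⊆ (univ : Finset (ZMod n)) ×ˢ
      (univ.filter (fun b : ZMod n => 3 * b = 0 ∧ b ≠ 0)) := by
    intro p hp
    simp only [Qc, mem_filter, mem_univ, true_and] at hp
    rw [Finset.mem_product, mem_filter]
    exact ⟨mem_univ _, mem_univ _, hp.2.1, hp.1⟩
  calc (Qc n χ).card ≤ _ := Finset.card_le_card hsub
  _ = 2 * n := by
    rw [Finset.card_product, torsion_card h3, Finset.card_univ, ZMod.card, mul_comm]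

lemma Qc_eq_of_shift (hodd : Odd n) (h3 : 3 ∣ n) (χ : ZMod n → Fin 2)
    (hshift : ∀ x : ZMod n, χ (x + ((n / 3 : ℕ) : ZMod n)) = χ x) :
    (Qc n χ).card = 2 * n := by
  set μ : ZMod n := ((n / 3 : ℕ) : ZMod n) with hμ
  have hμz : 3 * μ = 0 := by
    obtain ⟨m, hm⟩ := h3
    have hn0 : n ≠ 0 := NeZero.ne n
    have hdiv : n / 3 = m := by omega
    have : ((3 * m : ℕ) : ZMod n) = 0 := by rw [← hm]; exact ZMod.natCast_self n
    push_cast at this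
    rw [hμ, hdiv]; linear_combination this
  have hmono : ∀ a : ZMod n, ∀ b : ZMod n, (b = μ ∨ b = 2 * μ) → monoP χ (a, b) := by
    intro a b hb
    have s1 : ∀ x : ZMod n, χ (x + μ) = χ x := hshift
    rcases hb with rfl | rfl
    · constructor
      · exact (s1 a).symm
      · show χ a = χ (a + 2 * μ)
        rw [show a + 2 * μ = (a + μ) + μ by ring, s1, s1]
    · constructor
      · show χ a = χ (a + 2 * μ)
        rw [show a + 2 * μ = (a + μ) + μ by ring, s1, s1]
      · show χ a = χ (a + 2 * (2 * μ))
        rw [show a + 2 * (2 * μ) = (a + μ) + 3 * μ by ring, hμz, add_zero, s1]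
  have hQc : Qc n χ = (univ : Finset (ZMod n)) ×ˢ
      (univ.filter (fun b : ZMod n => 3 * b = 0 ∧ b ≠ 0)) := by
    ext p
    simp only [Qc, mem_filter, mem_univ, true_and, Finset.mem_product]
    constructor
    · rintro ⟨h1, h2, h3m⟩
      exact ⟨h2, h1⟩
    · rintro ⟨h3b, hbne⟩
      have hbin : p.2 ∈ (univ.filter (fun b : ZMod n => 3 * b = 0 ∧ b ≠ 0)) := by
        simp [h3b, hbne]
      rw [torsion_eq h3] at hbin
      simp only [mem_insert, mem_singleton] at hbin
      have hmp : monoP χ (p.1, p.2) := hmono p.1 p.2 hbin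
      exact ⟨hbne, h3b, hmp⟩
  rw [hQc, Finset.card_product, torsion_card h3, Finset.card_univ, ZMod.card, mul_comm]

end QcBounds

section Coloring
variable {n : ℕ} [NeZero n]

/-- The extremal coloring. -/
def chi0 (n : ℕ) [NeZero n] : ZMod n → Fin 2 :=
  fun x => if x.val % (n / 3) < (n / 3 + 1) / 2 then 0 else 1

lemma chi0_shift (h3 : 3 ∣ n) :
    ∀ x : ZMod n, chi0 n (x + ((n / 3 : ℕ) : ZMod n)) = chi0 n x := by
  obtain ⟨m, hm⟩ := h3
  have hn0 : n ≠ 0 := NeZero.ne n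
  have hdiv : n / 3 = m := by omega
  have hm0 : 0 < m := by omega
  intro x
  have hμval : (((m : ℕ)) : ZMod n).val = m := ZMod.val_natCast_of_lt (by omega)
  have hval : (x + ((m : ℕ) : ZMod n)).val = (x.val + m) % n := by
    rw [ZMod.val_add, hμval]
  have hxlt : x.val < n := ZMod.val_lt x
  have key : ((x.val + m) % n) % m = x.val % m := by
    rcases lt_or_ge (x.val + m) n with h | h
    · rw [Nat.mod_eq_of_lt h, Nat.add_mod_right]
    · have h2 : (x.val + m) % n = x.val + m - n := by
        rw [Nat.mod_eq_sub_mod h, Nat.mod_eq_of_lt (by omega)]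
      rw [h2]
      have h4 : x.val + m - n = x.val - 2 * m := by omega
      rw [h4]
      have hx2 : x.val = (x.val - 2 * m) + m + m := by omega
      conv_rhs => rw [hx2]
      rw [Nat.add_mod_right, Nat.add_mod_right]
  unfold chi0
  rw [hdiv, hval, key]

lemma chi0_alpha (h3 : 3 ∣ n) :
    (univ.filter (fun x : ZMod n => chi0 n x = 0)).card = 3 * ((n / 3 + 1) / 2) := by
  obtain ⟨m, hm⟩ := h3
  have hn0 : n ≠ 0 := NeZero.ne n
  have hdiv : n / 3 = m := by omega
  have hm0 : 0 < m := by omega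
  set k := (m + 1) / 2 with hk
  have hkm : k ≤ m := by omega
  have hmem : ∀ x : ZMod n, chi0 n x = 0 ↔ x.val % m < k := by
    intro x
    unfold chi0
    rw [hdiv, ← hk]
    constructor
    · intro h
      by_contra hc
      rw [if_neg hc] at h
      exact one_ne_zero h
    · intro h; rw [if_pos h]
  have hcount : (univ.filter (fun x : ZMod n => chi0 n x = 0)).card
      = ((Finset.range 3) ×ˢ (Finset.range k)).card := by
    apply Finset.card_nbij' (fun x => (x.val / m, x.val % m))
      (fun p => ((p.1 * m + p.2 : ℕ) : ZMod n))
    · intro x hx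
      simp only [Finset.mem_coe, mem_filter, mem_univ, true_and, hmem] at hx
      simp only [Finset.mem_coe, Finset.mem_product, Finset.mem_range]
      constructor
      · have hxlt : x.val < n := ZMod.val_lt x
        exact Nat.div_lt_of_lt_mul (by omega)
      · exact hx
    · intro p hp
      simp only [Finset.mem_coe, Finset.mem_product, Finset.mem_range] at hp
      obtain ⟨h1, h2⟩ := hp
      simp only [Finset.mem_coe, mem_filter, mem_univ, true_and, hmem]
      have hlt : p.1 * m + p.2 < n := by
        have : p.1 * m ≤ 2 * m := Nat.mul_le_mul_right m (by omega)
        omega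
      rw [ZMod.val_natCast_of_lt hlt, mul_comm, Nat.mul_add_mod, Nat.mod_eq_of_lt (by omega)]
      exact h2
    · intro x hx
      have h := Nat.div_add_mod x.val m
      have hxx : x.val / m * m + x.val % m = x.val := by rw [Nat.mul_comm]; exact h
      dsimp only
      rw [hxx]
      rw [ZMod.natCast_val, ZMod.cast_id]
    · intro p hp
      simp only [Finset.mem_coe, Finset.mem_product, Finset.mem_range] at hp
      obtain ⟨h1, h2⟩ := hp
      have hlt : p.1 * m + p.2 < n := by
        have : p.1 * m ≤ 2 * m := Nat.mul_le_mul_right m (by omega)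
        omega
      dsimp only
      rw [ZMod.val_natCast_of_lt hlt]
      have hdm : (p.1 * m + p.2) / m = p.1 := by
        rw [mul_comm, Nat.mul_add_div hm0, Nat.div_eq_of_lt (by omega), add_zero]
      have hmm : (p.1 * m + p.2) % m = p.2 := by
        rw [mul_comm, Nat.mul_add_mod, Nat.mod_eq_of_lt (by omega)]
      rw [hdm, hmm]
  rw [hcount, Finset.card_product, Finset.card_range, Finset.card_range, hdiv]

end Coloring

theorem stmt_16 (n : ℕ) [NeZero n] (hodd : Odd n) (h3 : 3 ∣ n) :
    (∀ χ : ZMod n → Fin 2,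
        (n : ℚ) ^ 2 / 8 - 7 * n / 6 + 3 / 8 ≤ (monoAPCount n χ : ℚ)) ∧
      (∃ χ : ZMod n → Fin 2,
        (monoAPCount n χ : ℚ) ≤ (n : ℚ) ^ 2 / 8 - 7 * n / 6 + 27 / 8) := by
  have hn0 : n ≠ 0 := NeZero.ne n
  obtain ⟨m, hm⟩ := h3
  have h3' : 3 ∣ n := ⟨m, hm⟩
  have hnodd : n % 2 = 1 := Nat.odd_iff.mp hodd
  constructor
  · intro χ
    set α : ℕ := (univ.filter (fun x : ZMod n => χ x = 0)).card with hα
    have hmaster := master_count hodd χ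
    have htot := total_split χ
    have hQallrfl : (univ.filter (fun p : ZMod n × ZMod n => p.2 ≠ 0 ∧ monoP χ p))
        = Qall n χ := rfl
    rw [hQallrfl] at htot
    have hMq := Mtotal_eq hodd χ
    have hQc := Qc_le χ h3'
    -- cast everything to ℚ
    have hmasterq : 6 * (monoAPCount n χ : ℚ) + 2 * ((Qc n χ).card : ℚ)
        = 3 * ((Qall n χ).card : ℚ) := by exact_mod_cast congrArg (Nat.cast : ℕ → ℚ) hmaster
    have htotq : ((univ.filter (fun p : ZMod n × ZMod n => monoP χ p)).card : ℚ)
        = ((Qall n χ).card : ℚ) + n := by exact_mod_cast congrArg (Nat.cast : ℕ → ℚ) htot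
    have hQcq : ((Qc n χ).card : ℚ) ≤ 2 * n := by exact_mod_cast hQc
    have hsqZ : 1 ≤ (2 * (α : ℤ) - n) ^ 2 := by
      have hne : 2 * (α : ℤ) - n ≠ 0 := by omega
      rcases lt_or_gt_of_ne hne with h | h <;> nlinarith
    have hsq : 1 ≤ (2 * (α : ℚ) - n) ^ 2 := by exact_mod_cast hsqZ
    nlinarith [hmasterq, htotq, hQcq, hsq, hMq]
  · refine ⟨chi0 n, ?_⟩
    set χ := chi0 n
    have hmodd : m % 2 = 1 := by omega
    set k : ℕ := (m + 1) / 2 with hk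
    have h2k : 2 * k = m + 1 := by omega
    have hαnat : (univ.filter (fun x : ZMod n => χ x = 0)).card = 3 * k := by
      have := chi0_alpha (n := n) h3'
      have hdiv : n / 3 = m := by omega
      rw [hdiv] at this
      exact this
    have hmaster := master_count hodd χ
    have htot := total_split χ
    have hQallrfl : (univ.filter (fun p : ZMod n × ZMod n => p.2 ≠ 0 ∧ monoP χ p))
        = Qall n χ := rfl
    rw [hQallrfl] at htot
    have hMq := Mtotal_eq hodd χ
    have hQc : (Qc n χ).card = 2 * n := Qc_eq_of_shift hodd h3' χ (chi0_shift h3')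
    have hmasterq : 6 * (monoAPCount n χ : ℚ) + 2 * ((Qc n χ).card : ℚ)
        = 3 * ((Qall n χ).card : ℚ) := by exact_mod_cast congrArg (Nat.cast : ℕ → ℚ) hmaster
    have htotq : ((univ.filter (fun p : ZMod n × ZMod n => monoP χ p)).card : ℚ)
        = ((Qall n χ).card : ℚ) + n := by exact_mod_cast congrArg (Nat.cast : ℕ → ℚ) htot
    have hQcq : ((Qc n χ).card : ℚ) = 2 * n := by exact_mod_cast congrArg (Nat.cast : ℕ → ℚ) hQc
    have hαq : (((univ.filter (fun x : ZMod n => χ x = 0)).card : ℕ) : ℚ)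
        = 3 * (((m : ℚ) + 1) / 2) := by
      rw [hαnat]
      have : ((2 * k : ℕ) : ℚ) = ((m + 1 : ℕ) : ℚ) := by
        exact_mod_cast congrArg (Nat.cast : ℕ → ℚ) h2k
      push_cast at this ⊢
      linarith
    have hnm : (n : ℚ) = 3 * m := by exact_mod_cast congrArg (Nat.cast : ℕ → ℚ) hm
    have hMval : ((univ.filter (fun p : ZMod n × ZMod n => monoP χ p)).card : ℚ)
        = ((n : ℚ) ^ 2 + 27) / 4 := by
      rw [hMq, hαq, hnm]; ring
    linarith [hmasterq, htotq, hQcq, hMval]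
end

section
/- Let n be a positive integer with 24 | n. Then R(3, Z_n, 2) = n^2/8 − 5n/3, where R(3, Z_n, 2) is the minimum number of monochromatic 3-term arithmetic progressions over all 2-colorings of Z_n. -/
open Finset

namespace AP17

variable {m : ℕ}

lemma hm_pos [NeZero (24*m)] : 0 < m := by
  have := NeZero.ne (24*m); omega

lemma val_cm [NeZero (24*m)] {c : ℕ} (hc : c < 24) :
    ((c*m : ℕ) : ZMod (24*m)).val = c*m := by
  have hm := hm_pos (m := m)
  exact ZMod.val_natCast_of_lt (by nlinarith)

lemma castN [NeZero (24*m)] : ((24*m : ℕ) : ZMod (24*m)) = 0 := ZMod.natCast_self _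

lemma cast_self_zmod [NeZero (24*m)] (z : ZMod (24*m)) :
    ((z.val : ℕ) : ZMod (24*m)) = z := by rw [ZMod.natCast_val, ZMod.cast_id]

lemma two_mul_eq_zero [NeZero (24*m)] (z : ZMod (24*m)) :
    2 * z = 0 ↔ z = 0 ∨ z = ((12*m : ℕ) : ZMod (24*m)) := by
  have hm := hm_pos (m := m)
  have hN := castN (m := m)
  constructor
  · intro h
    have h2 : ((2 * z.val : ℕ) : ZMod (24*m)) = 0 := by
      push_cast
      rw [ZMod.natCast_val, ZMod.cast_id]
      exact h
    rw [ZMod.natCast_eq_zero_iff] at h2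
    have hlt : z.val < 24*m := ZMod.val_lt z
    have : z.val = 0 ∨ z.val = 12*m := by
      rcases h2 with ⟨k, hk⟩
      have hk2 : k < 2 := by nlinarith
      interval_cases k <;> omega
    rcases this with h' | h'
    · left; rw [← cast_self_zmod z, h']; simp
    · right; rw [← cast_self_zmod z, h']
  · rintro (rfl | rfl)
    · ring
    · push_cast at hN ⊢; linear_combination hN

lemma three_mul_eq_zero [NeZero (24*m)] (z : ZMod (24*m)) :
    3 * z = 0 ↔ z = 0 ∨ z = ((8*m : ℕ) : ZMod (24*m)) ∨ z = ((16*m : ℕ) : ZMod (24*m)) := by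
  have hm := hm_pos (m := m)
  have hN := castN (m := m)
  constructor
  · intro h
    have h2 : ((3 * z.val : ℕ) : ZMod (24*m)) = 0 := by
      push_cast
      rw [ZMod.natCast_val, ZMod.cast_id]
      linear_combination h
    rw [ZMod.natCast_eq_zero_iff] at h2
    have hlt : z.val < 24*m := ZMod.val_lt z
    have : z.val = 0 ∨ z.val = 8*m ∨ z.val = 16*m := by
      rcases h2 with ⟨k, hk⟩
      have hk2 : k < 3 := by nlinarith
      interval_cases k <;> omega
    rcases this with h' | h' | h'
    · left; rw [← cast_self_zmod z, h']; simp
    · right; left; rw [← cast_self_zmod z, h']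
    · right; right; rw [← cast_self_zmod z, h']
  · rintro (rfl | rfl | rfl)
    · ring
    · push_cast at hN ⊢; linear_combination hN
    · push_cast at hN ⊢; linear_combination 2*hN


set_option linter.unusedSectionVars false

section withN
variable [NeZero (24*m)]

def ee (χ : ZMod (24*m) → Fin 2) (x : ZMod (24*m)) : ℤ := if χ x = 0 then 1 else -1

def Mono (χ : ZMod (24*m) → Fin 2) (a b : ZMod (24*m)) : Prop :=
  χ a = χ (a+b) ∧ χ a = χ (a+2*b)

instance (χ : ZMod (24*m) → Fin 2) (a b : ZMod (24*m)) : Decidable (Mono χ a b) :=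
  inferInstanceAs (Decidable (_ ∧ _))

def S (χ : ZMod (24*m) → Fin 2) : ℤ := ∑ x, ee χ x
def Ev : Finset (ZMod (24*m)) := univ.filter (fun x => x.val % 2 = 0)
def Od : Finset (ZMod (24*m)) := univ.filter (fun x => x.val % 2 = 1)
def S0 (χ : ZMod (24*m) → Fin 2) : ℤ := ∑ x ∈ Ev, ee χ x
def S1 (χ : ZMod (24*m) → Fin 2) : ℤ := ∑ x ∈ Od, ee χ x

lemma pointwise (χ : ZMod (24*m) → Fin 2) (a b : ZMod (24*m)) :
    (if Mono χ a b then (4:ℤ) else 0) =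
      1 + ee χ a * ee χ (a+b) + ee χ (a+b) * ee χ (a+2*b) + ee χ a * ee χ (a+2*b) := by
  have h2 : ∀ v : Fin 2, v = 0 ∨ v = 1 := by decide
  rcases h2 (χ a) with h|h <;> rcases h2 (χ (a+b)) with h'|h' <;>
    rcases h2 (χ (a+2*b)) with h''|h'' <;>
    simp [Mono, ee, h, h', h'']

lemma shiftS (χ : ZMod (24*m) → Fin 2) (a : ZMod (24*m)) :
    ∑ b, ee χ (a + b) = S χ := by
  exact Equiv.sum_comp (Equiv.addLeft a) (ee χ)

lemma L1 (χ : ZMod (24*m) → Fin 2) :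
    ∑ a, ∑ b, ee χ a * ee χ (a+b) = S χ ^ 2 := by
  have : ∀ a : ZMod (24*m), ∑ b, ee χ a * ee χ (a+b) = ee χ a * S χ := by
    intro a; rw [← mul_sum, shiftS]
  simp_rw [this]
  rw [← sum_mul, S]; ring

lemma L2 (χ : ZMod (24*m) → Fin 2) :
    ∑ a, ∑ b, ee χ (a+b) * ee χ (a+2*b) = S χ ^ 2 := by
  have h1 : ∀ a b : ZMod (24*m), ee χ (a+b) * ee χ (a+2*b) = ee χ (a+b) * ee χ ((a+b)+b) := by
    intro a b; ring_nf
  simp_rw [h1]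
  rw [Finset.sum_comm]
  have h2 : ∀ b : ZMod (24*m), ∑ a, ee χ (a+b) * ee χ ((a+b)+b) =
      ∑ c, ee χ c * ee χ (c + b) := by
    intro b
    exact Equiv.sum_comp (Equiv.addRight b) (fun c => ee χ c * ee χ (c + b))
  simp_rw [h2]
  rw [Finset.sum_comm]
  exact L1 χ

lemma parity_add (a b : ZMod (24*m)) : (a + b).val % 2 = (a.val + b.val) % 2 := by
  rw [ZMod.val_add, Nat.mod_mod_of_dvd _ ⟨12*m, by ring⟩]

lemma fiber_two {y : ZMod (24*m)} (hy : y.val % 2 = 0) :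
    (univ.filter (fun b : ZMod (24*m) => 2*b = y)) =
      {((y.val/2 : ℕ) : ZMod (24*m)), ((y.val/2 : ℕ) : ZMod (24*m)) + ((12*m:ℕ) : ZMod (24*m))} := by
  have hm := hm_pos (m := m)
  have hb1 : 2 * ((y.val/2 : ℕ) : ZMod (24*m)) = y := by
    have : ((2 * (y.val/2) : ℕ) : ZMod (24*m)) = ((y.val : ℕ) : ZMod (24*m)) := by
      congr 1; omega
    rw [cast_self_zmod] at this
    push_cast at this
    linear_combination this
  ext b
  simp only [mem_filter, mem_univ, true_and, mem_insert, mem_singleton]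
  constructor
  · intro h
    have : 2 * (b - ((y.val/2 : ℕ) : ZMod (24*m))) = 0 := by
      rw [mul_sub, h, hb1, sub_self]
    rcases (two_mul_eq_zero _).1 this with h' | h'
    · left; linear_combination h'
    · right; linear_combination h'
  · rintro (rfl | rfl)
    · exact hb1
    · have hN := castN (m := m)
      push_cast at hN ⊢
      linear_combination hb1 + hN

lemma twelve_ne_zero : ((12*m:ℕ) : ZMod (24*m)) ≠ 0 := by
  have hm := hm_pos (m := m)
  intro h
  have := val_cm (m := m) (c := 12) (by norm_num)
  rw [h] at this
  simp [ZMod.val_zero] at this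
  omega

lemma double_sum (G : ZMod (24*m) → ℤ) :
    ∑ b, G (2*b) = 2 * ∑ y ∈ Ev, G y := by
  have hm := hm_pos (m := m)
  have hmaps : ∀ b : ZMod (24*m), b ∈ univ → 2*b ∈ Ev := by
    intro b _
    simp only [Ev, mem_filter, mem_univ, true_and]
    rw [two_mul, parity_add]; omega
  rw [← Finset.sum_fiberwise_of_maps_to hmaps (fun b => G (2*b))]
  rw [mul_sum]
  apply sum_congr rfl
  intro y hy
  simp only [Ev, mem_filter] at hy
  have h1 : ∀ b ∈ univ.filter (fun b : ZMod (24*m) => 2*b = y), G (2*b) = G y := by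
    intro b hb
    simp only [mem_filter] at hb
    rw [hb.2]
  rw [sum_congr rfl h1, sum_const, fiber_two hy.2]
  have hne : ((y.val/2 : ℕ) : ZMod (24*m)) ≠ ((y.val/2 : ℕ) : ZMod (24*m)) + ((12*m:ℕ) : ZMod (24*m)) := by
    intro h
    exact twelve_ne_zero (m := m) (by linear_combination -h)
  rw [card_insert_of_notMem (by rw [mem_singleton]; exact hne), card_singleton]
  rw [nsmul_eq_mul]
  norm_num


lemma parity_sub (x a : ZMod (24*m)) : (x - a).val % 2 = (x.val + a.val) % 2 := by
  have h := parity_add (m := m) a (x - a)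
  rw [add_sub_cancel] at h
  omega

lemma shiftEv (χ : ZMod (24*m) → Fin 2) (a : ZMod (24*m)) :
    ∑ y ∈ Ev, ee χ (a + y) = if a.val % 2 = 0 then S0 χ else S1 χ := by
  by_cases ha : a.val % 2 = 0
  · rw [if_pos ha, S0]
    apply Finset.sum_nbij' (i := fun y => a + y) (j := fun x => x - a)
    · intro y hy
      simp only [Ev, mem_filter, mem_univ, true_and] at hy ⊢
      rw [parity_add]; omega
    · intro x hx
      simp only [Ev, mem_filter, mem_univ, true_and] at hx ⊢
      rw [parity_sub]; omega
    · intro y _; ring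
    · intro x _; ring
    · intro y _; rfl
  · rw [if_neg ha, S1]
    apply Finset.sum_nbij' (i := fun y => a + y) (j := fun x => x - a)
    · intro y hy
      simp only [Ev, Od, mem_filter, mem_univ, true_and] at hy ⊢
      rw [parity_add]; omega
    · intro x hx
      simp only [Ev, Od, mem_filter, mem_univ, true_and] at hx ⊢
      rw [parity_sub]; omega
    · intro y _; ring
    · intro x _; ring
    · intro y _; rfl

lemma L3 (χ : ZMod (24*m) → Fin 2) :
    ∑ a, ∑ b, ee χ a * ee χ (a+2*b) = 2*(S0 χ^2 + S1 χ^2) := by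
  have h1 : ∀ a : ZMod (24*m), ∑ b, ee χ a * ee χ (a+2*b)
      = ee χ a * (2 * (if a.val % 2 = 0 then S0 χ else S1 χ)) := by
    intro a
    rw [← mul_sum, double_sum (fun y => ee χ (a+y)), shiftEv]
  simp_rw [h1]
  rw [← sum_filter_add_sum_filter_not univ (fun a : ZMod (24*m) => a.val % 2 = 0)]
  have h2 : ∀ a ∈ univ.filter (fun a : ZMod (24*m) => a.val % 2 = 0),
      ee χ a * (2 * (if a.val % 2 = 0 then S0 χ else S1 χ)) = 2 * (ee χ a * S0 χ) := by
    intro a ha; simp only [mem_filter] at ha; rw [if_pos ha.2]; ring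
  have h3 : ∀ a ∈ univ.filter (fun a : ZMod (24*m) => ¬ a.val % 2 = 0),
      ee χ a * (2 * (if a.val % 2 = 0 then S0 χ else S1 χ)) = 2 * (ee χ a * S1 χ) := by
    intro a ha; simp only [mem_filter] at ha; rw [if_neg ha.2]; ring
  rw [sum_congr rfl h2, sum_congr rfl h3, ← mul_sum, ← mul_sum, ← sum_mul, ← sum_mul]
  have h4 : univ.filter (fun a : ZMod (24*m) => ¬ a.val % 2 = 0) = Od := by
    apply filter_congr; intro a _; omega
  rw [h4]
  rw [show (univ.filter (fun a : ZMod (24*m) => a.val % 2 = 0)) = Ev from rfl]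
  rw [← S0, ← S1]; ring

def Tz (χ : ZMod (24*m) → Fin 2) : ℤ := ∑ a, ∑ b, (if Mono χ a b then (1:ℤ) else 0)

lemma TT (χ : ZMod (24*m) → Fin 2) :
    4 * Tz χ = (24*m:ℤ)^2 + 2*S χ^2 + 2*(S0 χ^2 + S1 χ^2) := by
  rw [Tz, mul_sum]
  simp_rw [mul_sum, mul_ite, mul_one, mul_zero, pointwise]
  simp_rw [sum_add_distrib]
  rw [L1, L2, L3]
  have : ∑ _a : ZMod (24*m), ∑ _b : ZMod (24*m), (1:ℤ) = (24*m:ℤ)^2 := by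
    simp [card_univ, ZMod.card]; ring
  rw [this]; ring


-- ## generic 3-set helpers
lemma card3_distinct {α : Type*} [DecidableEq α] {x y z : α}
    (h : ({x,y,z} : Finset α).card = 3) : x ≠ y ∧ x ≠ z ∧ y ≠ z := by
  refine ⟨?_, ?_, ?_⟩ <;> rintro rfl
  · rw [Finset.insert_idem] at h
    have := Finset.card_insert_le x ({z} : Finset _)
    simp at this; omega
  · rw [Finset.insert_comm, Finset.pair_eq_singleton] at h
    have := Finset.card_insert_le y ({x} : Finset _)
    simp at this; omega
  · rw [Finset.pair_eq_singleton] at h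
    have := Finset.card_insert_le x ({y} : Finset _)
    simp at this; omega

lemma card3_of_distinct {α : Type*} [DecidableEq α] {x y z : α}
    (h1 : x ≠ y) (h2 : x ≠ z) (h3 : y ≠ z) : ({x,y,z} : Finset α).card = 3 := by
  rw [Finset.card_insert_of_notMem (by simp [h1, h2]),
      Finset.card_insert_of_notMem (by simp [h3]), Finset.card_singleton]

lemma sum3 {M : Type*} [AddCommMonoid M] [DecidableEq M] {x y z : M}
    (h1 : x ≠ y) (h2 : x ≠ z) (h3 : y ≠ z) :
    ∑ w ∈ ({x,y,z} : Finset M), w = x + y + z := by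
  rw [Finset.sum_insert (by simp [h1, h2]), Finset.sum_insert (by simp [h3]),
      Finset.sum_singleton, add_assoc]

lemma third {M : Type*} [AddCommGroup M] [DecidableEq M] {s : Finset M} {a b : M}
    (h3 : s.card = 3) (ha : a ∈ s) (hb : b ∈ s) (hne : a ≠ b) :
    s = {a, b, (∑ x ∈ s, x) - a - b} ∧ (∑ x ∈ s, x) - a - b ≠ a ∧ (∑ x ∈ s, x) - a - b ≠ b := by
  have hbe : b ∈ s.erase a := Finset.mem_erase.2 ⟨hne.symm, hb⟩
  have hc1 : (s.erase a).card = 2 := by rw [Finset.card_erase_of_mem ha, h3]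
  have hc2 : ((s.erase a).erase b).card = 1 := by rw [Finset.card_erase_of_mem hbe, hc1]
  obtain ⟨t, ht⟩ := Finset.card_eq_one.1 hc2
  have hs : s = {a, b, t} := by
    rw [show ({a,b,t} : Finset M) = insert a (insert b {t}) from rfl, ← ht,
      Finset.insert_erase hbe, Finset.insert_erase ha]
  have htmem : t ∈ (s.erase a).erase b := by rw [ht]; exact Finset.mem_singleton_self t
  have hta : t ≠ a := by
    have := Finset.mem_erase.1 (Finset.mem_of_mem_erase htmem); exact this.1
  have htb : t ≠ b := (Finset.mem_erase.1 htmem).1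
  have hsum : ∑ x ∈ s, x = a + b + t := by
    rw [hs]; exact sum3 hne hta.symm htb.symm
  have htt : (∑ x ∈ s, x) - a - b = t := by rw [hsum]; abel
  rw [htt]
  exact ⟨hs, fun h => hta (h.symm ▸ rfl) , fun h => htb (h.symm ▸ rfl)⟩


variable [NeZero (24*m)]

def Pn (χ : ZMod (24*m) → Fin 2) : ℕ :=
  (univ.filter (fun a : ZMod (24*m) => χ a = χ (a + ((12*m:ℕ) : ZMod (24*m))))).card

def OSet (χ : ZMod (24*m) → Fin 2) : Finset (ZMod (24*m) × ZMod (24*m)) :=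
  (univ ×ˢ univ).filter (fun p => p.2 ≠ 0 ∧ 2*p.2 ≠ 0 ∧ Mono χ p.1 p.2)

def MSet (χ : ZMod (24*m) → Fin 2) : Finset (ZMod (24*m) × ZMod (24*m)) :=
  (univ ×ˢ univ).filter (fun p => Mono χ p.1 p.2)

lemma Tz_eq_MSet (χ : ZMod (24*m) → Fin 2) : Tz χ = ((MSet χ).card : ℤ) := by
  rw [Tz, MSet, ← Finset.sum_product']
  rw [Finset.sum_boole]

lemma Tsplit (χ : ZMod (24*m) → Fin 2) :
    (MSet χ).card = 24*m + Pn χ + (OSet χ).card := by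
  have hm := hm_pos (m := m)
  classical
  rw [← Finset.card_filter_add_card_filter_not
    (s := MSet χ) (p := fun p => p.2 = 0)]
  have e0 : (MSet χ).filter (fun p => p.2 = 0) = univ ×ˢ {0} := by
    ext ⟨a, b⟩
    simp only [MSet, Finset.filter_filter, mem_filter, mem_product, mem_univ, true_and,
      mem_singleton]
    constructor
    · rintro ⟨_, h⟩; exact h
    · rintro rfl
      exact ⟨⟨by rw [add_zero], by rw [mul_zero, add_zero]⟩, rfl⟩
  rw [e0, Finset.card_product, Finset.card_singleton, card_univ, ZMod.card, mul_one]
  have step2 : ((MSet χ).filter (fun p => ¬ p.2 = 0)).card = Pn χ + (OSet χ).card := by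
    rw [← Finset.card_filter_add_card_filter_not
      (s := (MSet χ).filter (fun p => ¬ p.2 = 0)) (p := fun p => p.2 = ((12*m:ℕ) : ZMod (24*m)))]
    congr 1
    · -- card = Pn
      rw [show ((MSet χ).filter (fun p => ¬ p.2 = 0)).filter
            (fun p => p.2 = ((12*m:ℕ) : ZMod (24*m)))
          = (univ.filter (fun a : ZMod (24*m) => χ a = χ (a + ((12*m:ℕ) : ZMod (24*m)))))
              ×ˢ {((12*m:ℕ) : ZMod (24*m))} from ?_]
      · rw [Finset.card_product, Finset.card_singleton, mul_one, Pn]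
      ext ⟨a, b⟩
      simp only [MSet, Finset.filter_filter, mem_filter, mem_product, mem_univ, true_and,
        mem_singleton]
      constructor
      · rintro ⟨⟨⟨h1, _⟩, _⟩, rfl⟩; exact ⟨h1, rfl⟩
      · rintro ⟨h1, rfl⟩
        refine ⟨⟨⟨h1, ?_⟩, twelve_ne_zero (m := m)⟩, rfl⟩
        have hN := castN (m := m)
        have h2 : 2 * ((12*m:ℕ) : ZMod (24*m)) = 0 := by
          push_cast at hN ⊢; linear_combination hN
        rw [h2, add_zero]
    · -- card = OSet
      congr 1
      rw [OSet, MSet, Finset.filter_filter, Finset.filter_filter]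
      apply Finset.filter_congr
      rintro ⟨a, b⟩ _
      simp only [ne_eq, two_mul_eq_zero b]
      tauto
  omega


def piMap (p : ZMod (24*m) × ZMod (24*m)) : Finset (ZMod (24*m)) :=
  {p.1, p.1 + p.2, p.1 + 2*p.2}

def monoSets (χ : ZMod (24*m) → Fin 2) : Finset (Finset (ZMod (24*m))) :=
  (apSets (24*m)).filter (fun s => ∀ x ∈ s, ∀ y ∈ s, χ x = χ y)

def mids (s : Finset (ZMod (24*m))) : Finset (ZMod (24*m)) :=
  s.filter (fun μ => 3*μ = ∑ x ∈ s, x)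

def BadS (χ : ZMod (24*m) → Fin 2) : Finset (Finset (ZMod (24*m))) :=
  (monoSets χ).filter (fun s => 2 ≤ (mids s).card)

lemma monoAPCount_eq (χ : ZMod (24*m) → Fin 2) :
    monoAPCount (24*m) χ = (monoSets χ).card := rfl

lemma apSets_elim {s : Finset (ZMod (24*m))} (hs : s ∈ apSets (24*m)) :
    s.card = 3 ∧ ∃ a b : ZMod (24*m), b ≠ 0 ∧ 2*b ≠ 0 ∧ s = {a, a+b, a+2*b}
      ∧ a ≠ a+b ∧ a ≠ a+2*b ∧ a+b ≠ a+2*b := by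
  rw [apSets, mem_filter] at hs
  obtain ⟨-, ⟨a, b, hb, hset⟩, hcard⟩ := hs
  have hd := card3_distinct (hset ▸ hcard)
  refine ⟨hcard, a, b, hb, ?_, hset, hd.1, hd.2.1, hd.2.2⟩
  intro h2b
  exact hd.2.1 (by rw [h2b, add_zero])

lemma sum_apSet {a b : ZMod (24*m)} (h1 : a ≠ a+b) (h2 : a ≠ a+2*b) (h3 : a+b ≠ a+2*b) :
    ∑ x ∈ ({a, a+b, a+2*b} : Finset (ZMod (24*m))), x = 3*a + 3*b := by
  rw [sum3 h1 h2 h3]; ring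

lemma mids_nonempty {s : Finset (ZMod (24*m))} (hs : s ∈ apSets (24*m)) :
    1 ≤ (mids s).card := by
  obtain ⟨hcard, a, b, hb, h2b, hset, hd1, hd2, hd3⟩ := apSets_elim hs
  refine Nat.one_le_iff_ne_zero.2 (fun h => ?_)
  rw [Finset.card_eq_zero] at h
  have : a + b ∈ mids s := by
    rw [mids, mem_filter]
    constructor
    · rw [hset]; simp
    · rw [hset, sum_apSet hd1 hd2 hd3]; ring
  rw [h] at this; exact absurd this (Finset.notMem_empty _)

def gmap (x : ZMod (24*m)) : Finset (ZMod (24*m)) :=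
  {x, x + ((8*m:ℕ) : ZMod (24*m)), x + ((16*m:ℕ) : ZMod (24*m))}

lemma bad_struct {s : Finset (ZMod (24*m))} (hs : s ∈ apSets (24*m))
    (hbad : 2 ≤ (mids s).card) : (mids s).card = 3 ∧ ∃ x, s = gmap x := by
  have hcard := (apSets_elim hs).1
  obtain ⟨μ, hμ, μ', hμ', hne⟩ := Finset.one_lt_card.1 hbad
  have hμs : μ ∈ s := Finset.mem_of_mem_filter _ hμ
  have hμ's : μ' ∈ s := Finset.mem_of_mem_filter _ hμ'
  have hμm : 3*μ = ∑ x ∈ s, x := (Finset.mem_filter.1 hμ).2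
  have hμ'm : 3*μ' = ∑ x ∈ s, x := (Finset.mem_filter.1 hμ').2
  obtain ⟨hseq, ht1, ht2⟩ := third hcard hμs hμ's hne
  set t := (∑ x ∈ s, x) - μ - μ' with htdef
  have hadd : ((8*m:ℕ) : ZMod (24*m)) + ((16*m:ℕ) : ZMod (24*m)) = 0 := by
    rw [← Nat.cast_add, show 8*m+16*m = 24*m by ring, castN]
  have htm : 3*t = ∑ x ∈ s, x := by
    linear_combination 3*htdef - hμm - hμ'm
  have hsub : s ⊆ mids s := by
    intro w hw
    rw [hseq, mem_insert, mem_insert, mem_singleton] at hw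
    rw [mids, mem_filter]
    rcases hw with rfl | rfl | rfl
    · exact ⟨hμs, hμm⟩
    · exact ⟨hμ's, hμ'm⟩
    · exact ⟨hseq ▸ (by simp), htm⟩
  have hmideq : mids s = s := Finset.Subset.antisymm (Finset.filter_subset _ _) hsub
  refine ⟨by rw [hmideq, hcard], ?_⟩
  -- structure
  have h3 : 3*(μ' - μ) = 0 := by linear_combination hμ'm - hμm
  rcases (three_mul_eq_zero _).1 h3 with h | h | h
  · exact absurd (show μ = μ' by linear_combination -h) hne
  · -- μ' = μ + 8m
    refine ⟨μ, ?_⟩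
    have hμ'e : μ' = μ + ((8*m:ℕ) : ZMod (24*m)) := by linear_combination h
    have hte : t = μ + ((16*m:ℕ) : ZMod (24*m)) := by
      linear_combination htdef - hμm - hμ'e - hadd
    rw [gmap, hseq, hμ'e, hte]
  · -- μ' = μ + 16m
    refine ⟨μ, ?_⟩
    have hμ'e : μ' = μ + ((16*m:ℕ) : ZMod (24*m)) := by linear_combination h
    have hte : t = μ + ((8*m:ℕ) : ZMod (24*m)) := by
      linear_combination htdef - hμm - hμ'e - hadd
    rw [gmap, hseq, hμ'e, hte]
    ext w
    simp only [mem_insert, mem_singleton]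
    tauto


lemma piMap_mem_monoSets (χ : ZMod (24*m) → Fin 2) {p : ZMod (24*m) × ZMod (24*m)}
    (hp : p ∈ OSet χ) : piMap p ∈ monoSets χ := by
  obtain ⟨a, b⟩ := p
  rw [OSet, mem_filter] at hp
  obtain ⟨-, hb, h2b, hM⟩ := hp
  have hd1 : a ≠ a + b := fun h => hb (by linear_combination -h)
  have hd2 : a ≠ a + 2*b := fun h => h2b (by linear_combination -h)
  have hd3 : a + b ≠ a + 2*b := fun h => hb (by linear_combination -h)
  rw [monoSets, mem_filter, apSets, mem_filter]
  refine ⟨⟨mem_univ _, ⟨a, b, hb, rfl⟩, card3_of_distinct hd1 hd2 hd3⟩, ?_⟩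
  intro x hx y hy
  obtain ⟨hM1, hM2⟩ := hM
  simp only [piMap, mem_insert, mem_singleton] at hx hy
  rcases hx with rfl | rfl | rfl <;> rcases hy with rfl | rfl | rfl <;>
    first
      | rfl
      | exact hM1
      | exact hM2
      | exact hM1.symm
      | exact hM2.symm
      | exact hM1.symm.trans hM2
      | exact hM2.symm.trans hM1

lemma fiber_eq (χ : ZMod (24*m) → Fin 2) {s : Finset (ZMod (24*m))}
    (hs : s ∈ monoSets χ) :
    (OSet χ).filter (fun p => piMap p = s) = (univ ×ˢ univ).filter (fun p => piMap p = s) := by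
  rw [monoSets, mem_filter] at hs
  obtain ⟨hsap, hmono⟩ := hs
  have hcard := (apSets_elim hsap).1
  rw [OSet, Finset.filter_filter]
  apply Finset.filter_congr
  rintro ⟨a, b⟩ _
  simp only
  constructor
  · rintro ⟨_, h⟩; exact h
  · intro h
    have hb : b ≠ 0 := by
      rintro rfl
      have : piMap (a, (0 : ZMod (24*m))) = {a} := by
        simp [piMap]
      rw [this] at h
      rw [← h] at hcard
      simp at hcard
    have h2b : 2*b ≠ 0 := by
      intro h2
      have : piMap (a, b) = {a, a+b} := by
        simp only [piMap]
        rw [show a + 2*b = a by rw [h2, add_zero]]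
        ext w; simp only [mem_insert, mem_singleton]; tauto
      rw [this] at h
      rw [← h] at hcard
      have := Finset.card_insert_le a ({a+b} : Finset (ZMod (24*m)))
      simp at this; omega
    have ha : a ∈ s := by rw [← h]; simp [piMap]
    have hab : a + b ∈ s := by rw [← h]; simp [piMap]
    have hab2 : a + 2*b ∈ s := by rw [← h]; simp [piMap]
    exact ⟨⟨hb, h2b, hmono a ha (a+b) hab, hmono a ha (a+2*b) hab2⟩, h⟩

lemma fiber_card (χ : ZMod (24*m) → Fin 2) {s : Finset (ZMod (24*m))}
    (hs : s ∈ monoSets χ) :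
    ((OSet χ).filter (fun p => piMap p = s)).card = 2 * (mids s).card := by
  rw [fiber_eq χ hs]
  rw [monoSets, mem_filter] at hs
  obtain ⟨hsap, hmono⟩ := hs
  have hcard := (apSets_elim hsap).1
  -- bijection to (s ×ˢ mids s).filter (q.1 ≠ q.2)
  have hbij : ((univ ×ˢ univ).filter (fun p : ZMod (24*m) × ZMod (24*m) => piMap p = s)).card
      = ((s ×ˢ mids s).filter (fun q => q.1 ≠ q.2)).card := by
    apply Finset.card_nbij' (i := fun p => (p.1, p.1 + p.2)) (j := fun q => (q.1, q.2 - q.1))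
    · rintro ⟨a, b⟩ hp
      rw [mem_coe, mem_filter] at hp
      have h := hp.2
      have hc3 : ({a, a+b, a+2*b} : Finset (ZMod (24*m))).card = 3 := by
        rw [show ({a, a+b, a+2*b} : Finset (ZMod (24*m))) = piMap (a,b) from rfl, h, hcard]
      have hd := card3_distinct hc3
      rw [mem_coe, mem_filter, mem_product]
      have hmem1 : a ∈ s := by rw [← h]; simp [piMap]
      have hmem2 : a + b ∈ s := by rw [← h]; simp [piMap]
      have hmid : a + b ∈ mids s := by
        rw [mids, mem_filter]
        refine ⟨hmem2, ?_⟩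
        rw [← h, show piMap (a,b) = ({a, a+b, a+2*b} : Finset (ZMod (24*m))) from rfl,
          sum_apSet hd.1 hd.2.1 hd.2.2]
        ring
      exact ⟨⟨hmem1, hmid⟩, by simpa using hd.1⟩
    · rintro ⟨α, μ⟩ hq
      rw [mem_coe, mem_filter, mem_product] at hq
      obtain ⟨⟨hα, hμ⟩, hne⟩ := hq
      simp only at hα hμ hne ⊢
      have hμs : μ ∈ s := Finset.mem_of_mem_filter _ hμ
      have hμm : 3*μ = ∑ x ∈ s, x := (Finset.mem_filter.1 hμ).2
      obtain ⟨hseq, ht1, ht2⟩ := third hcard hα hμs hne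
      rw [mem_coe, mem_filter]
      refine ⟨by simp, ?_⟩
      simp only [piMap]
      rw [show α + (μ - α) = μ by ring,
        show α + 2*(μ - α) = (∑ x ∈ s, x) - α - μ by linear_combination hμm]
      exact hseq.symm
    · rintro ⟨a, b⟩ _
      show (a, a + b - a) = (a, b)
      rw [add_sub_cancel_left]
    · rintro ⟨α, μ⟩ _
      show (α, α + (μ - α)) = (α, μ)
      rw [add_sub_cancel]
  rw [hbij]
  -- now count the target
  have hdiag : (s ×ˢ mids s).filter (fun q => q.1 = q.2) = (mids s).image (fun μ => (μ, μ)) := by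
    ext ⟨u, v⟩
    simp only [mem_filter, mem_product, Finset.mem_image, Prod.mk.injEq]
    constructor
    · rintro ⟨⟨hu, hv⟩, h⟩
      exact ⟨v, hv, h.symm, rfl⟩
    · rintro ⟨μ, hμ, rfl, rfl⟩
      exact ⟨⟨Finset.mem_of_mem_filter _ hμ, hμ⟩, rfl⟩
  have h1 := Finset.card_filter_add_card_filter_not
    (s := s ×ˢ mids s) (p := fun q => q.1 = q.2)
  rw [Finset.card_product, hcard, hdiag,
    Finset.card_image_of_injective _ (fun x y h => (Prod.mk.injEq _ _ _ _ ▸ h).1)] at h1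
  have h2 : ((s ×ˢ mids s).filter (fun q => ¬ q.1 = q.2)) = ((s ×ˢ mids s).filter (fun q => q.1 ≠ q.2)) := rfl
  rw [← h2]
  omega

lemma OSet_card (χ : ZMod (24*m) → Fin 2) :
    (OSet χ).card = 2 * (monoSets χ).card + 4 * (BadS χ).card := by
  rw [Finset.card_eq_sum_card_fiberwise (f := piMap) (t := monoSets χ)
    (fun p hp => piMap_mem_monoSets χ hp)]
  have h1 : ∀ s ∈ monoSets χ, ((OSet χ).filter (fun p => piMap p = s)).card
      = 2 * (mids s).card := fun s hs => fiber_card χ hs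
  rw [Finset.sum_congr rfl h1, ← Finset.mul_sum]
  have h2 : ∑ s ∈ monoSets χ, (mids s).card = (monoSets χ).card + 2 * (BadS χ).card := by
    rw [← Finset.sum_filter_add_sum_filter_not (monoSets χ) (fun s => 2 ≤ (mids s).card)]
    have h3 : ∀ s ∈ (monoSets χ).filter (fun s => 2 ≤ (mids s).card), (mids s).card = 3 := by
      intro s hs
      rw [mem_filter] at hs
      exact (bad_struct (Finset.mem_of_mem_filter _ hs.1) hs.2).1
    have h4 : ∀ s ∈ (monoSets χ).filter (fun s => ¬ 2 ≤ (mids s).card), (mids s).card = 1 := by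
      intro s hs
      rw [mem_filter] at hs
      have := mids_nonempty (Finset.mem_of_mem_filter _ hs.1)
      omega
    rw [Finset.sum_congr rfl h3, Finset.sum_congr rfl h4, Finset.sum_const, Finset.sum_const]
    have h5 := Finset.card_filter_add_card_filter_not
      (s := monoSets χ) (p := fun s => 2 ≤ (mids s).card)
    rw [BadS]
    simp only [smul_eq_mul]
    omega
  rw [h2]; ring


lemma cast88 : ((8*m:ℕ) : ZMod (24*m)) + ((8*m:ℕ) : ZMod (24*m)) = ((16*m:ℕ) : ZMod (24*m)) := by
  rw [← Nat.cast_add]; congr 1; ring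

lemma cast816 : ((8*m:ℕ) : ZMod (24*m)) + ((16*m:ℕ) : ZMod (24*m)) = 0 := by
  rw [← Nat.cast_add, show 8*m+16*m = 24*m by ring, castN]

lemma casttwo8 : 2 * ((8*m:ℕ) : ZMod (24*m)) = ((16*m:ℕ) : ZMod (24*m)) := by
  rw [two_mul]; exact cast88

lemma eight_ne_zero : ((8*m:ℕ) : ZMod (24*m)) ≠ 0 := by
  have hm := hm_pos (m := m)
  intro h
  have := val_cm (m := m) (c := 8) (by norm_num)
  rw [h] at this; simp [ZMod.val_zero] at this; omega

lemma sixteen_ne_zero : ((16*m:ℕ) : ZMod (24*m)) ≠ 0 := by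
  have hm := hm_pos (m := m)
  intro h
  have := val_cm (m := m) (c := 16) (by norm_num)
  rw [h] at this; simp [ZMod.val_zero] at this; omega

lemma eight_ne_sixteen : ((8*m:ℕ) : ZMod (24*m)) ≠ ((16*m:ℕ) : ZMod (24*m)) := by
  have hm := hm_pos (m := m)
  intro h
  have h8 := val_cm (m := m) (c := 8) (by norm_num)
  have h16 := val_cm (m := m) (c := 16) (by norm_num)
  rw [h] at h8; omega

lemma gmap_distinct (x : ZMod (24*m)) :
    x ≠ x + ((8*m:ℕ) : ZMod (24*m)) ∧ x ≠ x + ((16*m:ℕ) : ZMod (24*m))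
      ∧ x + ((8*m:ℕ) : ZMod (24*m)) ≠ x + ((16*m:ℕ) : ZMod (24*m)) := by
  refine ⟨fun h => eight_ne_zero (m := m) (by linear_combination -h),
    fun h => sixteen_ne_zero (m := m) (by linear_combination -h),
    fun h => eight_ne_sixteen (m := m) (by linear_combination h)⟩

lemma gmap_card (x : ZMod (24*m)) : (gmap x).card = 3 := by
  obtain ⟨h1, h2, h3⟩ := gmap_distinct x
  exact card3_of_distinct h1 h2 h3

lemma gmap_apSets (x : ZMod (24*m)) : gmap x ∈ apSets (24*m) := by
  rw [apSets, mem_filter]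
  refine ⟨mem_univ _, ⟨x, ((8*m:ℕ) : ZMod (24*m)), eight_ne_zero, ?_⟩, gmap_card x⟩
  rw [gmap, casttwo8]

lemma gmap_shift8 (x : ZMod (24*m)) :
    gmap (x + ((8*m:ℕ) : ZMod (24*m))) = gmap x := by
  rw [gmap, gmap, add_assoc, add_assoc, cast88, cast816, add_zero]
  ext w; simp only [mem_insert, mem_singleton]; tauto

lemma gmap_shift16 (x : ZMod (24*m)) :
    gmap (x + ((16*m:ℕ) : ZMod (24*m))) = gmap x := by
  rw [gmap, gmap, add_assoc, add_assoc,
    show ((16*m:ℕ) : ZMod (24*m)) + ((8*m:ℕ) : ZMod (24*m)) = 0 by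
      rw [add_comm]; exact cast816,
    show ((16*m:ℕ) : ZMod (24*m)) + ((16*m:ℕ) : ZMod (24*m)) = ((8*m:ℕ) : ZMod (24*m)) by
      have := cast816 (m := m)
      have hN := castN (m := m)
      rw [← Nat.cast_add, show 16*m+16*m = 24*m + 8*m by ring, Nat.cast_add, castN, zero_add],
    add_zero]
  ext w; simp only [mem_insert, mem_singleton]; tauto

lemma mem_gmap_self (x : ZMod (24*m)) : x ∈ gmap x := by
  rw [gmap]; exact mem_insert_self _ _

lemma badS_fiber (χ : ZMod (24*m) → Fin 2) {s : Finset (ZMod (24*m))} (hs : s ∈ BadS χ) :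
    ∃ x, s = gmap x := by
  rw [BadS, mem_filter] at hs
  exact (bad_struct (Finset.mem_of_mem_filter _ hs.1) hs.2).2

lemma Bn_le (χ : ZMod (24*m) → Fin 2) : 3 * (BadS χ).card ≤ 24*m := by
  classical
  set Z := univ.filter (fun x : ZMod (24*m) => gmap x ∈ BadS χ) with hZ
  have hmaps : ∀ x ∈ Z, gmap x ∈ BadS χ := by
    intro x hx; rw [hZ, mem_filter] at hx; exact hx.2
  have hcZ := Finset.card_eq_sum_card_fiberwise hmaps
  have hfib : ∀ s ∈ BadS χ, 3 ≤ (Z.filter (fun x => gmap x = s)).card := by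
    intro s hs
    obtain ⟨x, rfl⟩ := badS_fiber χ hs
    obtain ⟨h1, h2, h3⟩ := gmap_distinct x
    have hsub : ({x, x + ((8*m:ℕ) : ZMod (24*m)), x + ((16*m:ℕ) : ZMod (24*m))} : Finset _)
        ⊆ Z.filter (fun y => gmap y = gmap x) := by
      intro w hw
      rw [mem_insert, mem_insert, mem_singleton] at hw
      rw [mem_filter, hZ, mem_filter]
      rcases hw with rfl | rfl | rfl
      · exact ⟨⟨mem_univ _, hs⟩, rfl⟩
      · exact ⟨⟨mem_univ _, by rw [gmap_shift8]; exact hs⟩, gmap_shift8 x⟩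
      · exact ⟨⟨mem_univ _, by rw [gmap_shift16]; exact hs⟩, gmap_shift16 x⟩
    calc 3 = ({x, x + ((8*m:ℕ) : ZMod (24*m)), x + ((16*m:ℕ) : ZMod (24*m))} : Finset _).card :=
            (card3_of_distinct h1 h2 h3).symm
      _ ≤ _ := Finset.card_le_card hsub
  have : ∑ s ∈ BadS χ, 3 ≤ ∑ s ∈ BadS χ, (Z.filter (fun x => gmap x = s)).card :=
    Finset.sum_le_sum hfib
  rw [Finset.sum_const, smul_eq_mul] at this
  have hZle : Z.card ≤ 24*m := by
    calc Z.card ≤ (univ : Finset (ZMod (24*m))).card := Finset.card_le_card (Finset.filter_subset _ _)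
      _ = 24*m := by rw [card_univ, ZMod.card]
  omega

lemma Bn_eq (χ : ZMod (24*m) → Fin 2)
    (hper : ∀ x, χ (x + ((8*m:ℕ) : ZMod (24*m))) = χ x) :
    3 * (BadS χ).card = 24*m := by
  classical
  have hall : ∀ x : ZMod (24*m), gmap x ∈ BadS χ := by
    intro x
    have hmono : ∀ y ∈ gmap x, ∀ z ∈ gmap x, χ y = χ z := by
      have e1 : χ (x + ((8*m:ℕ) : ZMod (24*m))) = χ x := hper x
      have e2 : χ (x + ((16*m:ℕ) : ZMod (24*m))) = χ x := by
        rw [← cast88, ← add_assoc, hper, hper]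
      intro y hy z hz
      rw [gmap, mem_insert, mem_insert, mem_singleton] at hy hz
      rcases hy with rfl | rfl | rfl <;> rcases hz with rfl | rfl | rfl <;>
        simp only [e1, e2]
    rw [BadS, mem_filter, monoSets, mem_filter]
    refine ⟨⟨gmap_apSets x, hmono⟩, ?_⟩
    have hsum : ∑ w ∈ gmap x, w = 3*x := by
      obtain ⟨h1, h2, h3⟩ := gmap_distinct x
      rw [gmap, sum3 h1 h2 h3]
      have := cast816 (m := m)
      linear_combination this
    have hx : x ∈ mids (gmap x) := by
      rw [mids, mem_filter, hsum]
      exact ⟨mem_gmap_self x, rfl⟩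
    have hx8 : x + ((8*m:ℕ) : ZMod (24*m)) ∈ mids (gmap x) := by
      rw [mids, mem_filter, hsum]
      constructor
      · rw [gmap]; simp
      · have h8 : (3 : ZMod (24*m)) * ((8*m:ℕ) : ZMod (24*m)) = 0 := by
          have hN := castN (m := m)
          push_cast at hN ⊢
          linear_combination hN
        linear_combination h8
    exact Finset.one_lt_card.2 ⟨x, hx, x + ((8*m:ℕ) : ZMod (24*m)), hx8, (gmap_distinct x).1⟩
  set Z := univ.filter (fun x : ZMod (24*m) => gmap x ∈ BadS χ) with hZ
  have hZuniv : Z = univ := by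
    rw [hZ]; apply Finset.filter_true_of_mem; intro x _; exact hall x
  have hmaps : ∀ x ∈ Z, gmap x ∈ BadS χ := by
    intro x hx; rw [hZ, mem_filter] at hx; exact hx.2
  have hcZ := Finset.card_eq_sum_card_fiberwise hmaps
  have hfib : ∀ s ∈ BadS χ, (Z.filter (fun x => gmap x = s)).card ≤ 3 := by
    intro s hs
    have hsub : Z.filter (fun x => gmap x = s) ⊆ s := by
      intro w hw
      rw [mem_filter] at hw
      rw [← hw.2]
      exact mem_gmap_self w
    have hcard : s.card = 3 := by
      rw [BadS, mem_filter, monoSets, mem_filter] at hs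
      exact (apSets_elim hs.1.1).1
    calc (Z.filter (fun x => gmap x = s)).card ≤ s.card := Finset.card_le_card hsub
      _ = 3 := hcard
  have hle : ∑ s ∈ BadS χ, (Z.filter (fun x => gmap x = s)).card ≤ ∑ s ∈ BadS χ, 3 :=
    Finset.sum_le_sum hfib
  rw [Finset.sum_const, smul_eq_mul] at hle
  have h1 : Z.card = 24*m := by rw [hZuniv, card_univ, ZMod.card]
  have h2 := Bn_le (m := m) χ
  omega


lemma master (χ : ZMod (24*m) → Fin 2) :
    8 * (monoAPCount (24*m) χ : ℤ) =
      (24*m:ℤ)^2 + 2*S χ^2 + 2*(S0 χ^2 + S1 χ^2)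
        - 4*(24*m:ℤ) - 4*(Pn χ : ℤ) - 16*((BadS χ).card : ℤ) := by
  have h1 := TT χ
  have h2 := Tz_eq_MSet χ
  have h3 := Tsplit χ
  have h4 := OSet_card χ
  have h5 := monoAPCount_eq χ
  have h3' : ((MSet χ).card : ℤ) = 24*m + (Pn χ : ℤ) + ((OSet χ).card : ℤ) := by
    exact_mod_cast congrArg (Nat.cast : ℕ → ℤ) h3
  have h4' : ((OSet χ).card : ℤ) = 2*((monoSets χ).card : ℤ) + 4*((BadS χ).card : ℤ) := by
    exact_mod_cast congrArg (Nat.cast : ℕ → ℤ) h4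
  have h5' : (monoAPCount (24*m) χ : ℤ) = ((monoSets χ).card : ℤ) := by
    exact_mod_cast congrArg (Nat.cast : ℕ → ℤ) h5
  rw [h2, h3'] at h1
  push_cast at h1 ⊢
  linarith [h1, h4', h5']

lemma lower_bound (χ : ZMod (24*m) → Fin 2) :
    (72*(m:ℤ)^2 - 40*(m:ℤ)) ≤ (monoAPCount (24*m) χ : ℤ) := by
  have h := master χ
  have hP : (Pn χ : ℤ) ≤ 24*m := by
    have : Pn χ ≤ 24*m := by
      rw [Pn]
      calc (univ.filter _).card ≤ (univ : Finset (ZMod (24*m))).card :=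
            Finset.card_le_card (Finset.filter_subset _ _)
        _ = 24*m := by rw [card_univ, ZMod.card]
    exact_mod_cast this
  have hB : 3*((BadS χ).card : ℤ) ≤ 24*m := by exact_mod_cast Bn_le χ
  have hsq : (0:ℤ) ≤ 2*S χ^2 + 2*(S0 χ^2 + S1 χ^2) := by positivity
  nlinarith [h, hP, hB, hsq]

def chi0 : ZMod (24*m) → Fin 2 := fun x => if x.val % (4*m) < 2*m then 0 else 1

lemma chi0_eq_zero (x : ZMod (24*m)) : chi0 x = 0 ↔ x.val % (4*m) < 2*m := by
  rw [chi0]; split <;> simp [*]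

lemma val_add_nat (x : ZMod (24*m)) {c : ℕ} (hc : c < 24*m) :
    (x + (c : ZMod (24*m))).val % (4*m) = (x.val + c) % (4*m) := by
  rw [ZMod.val_add, ZMod.val_natCast_of_lt hc, Nat.mod_mod_of_dvd _ ⟨6, by ring⟩]

lemma chi0_per8 (x : ZMod (24*m)) : chi0 (x + ((8*m:ℕ) : ZMod (24*m))) = chi0 x := by
  have hm := hm_pos (m := m)
  rw [chi0, chi0, val_add_nat x (show 8*m < 24*m by omega)]
  rw [show x.val + 8*m = x.val + 2*(4*m) by ring, Nat.add_mul_mod_self_right]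

lemma chi0_per12 (x : ZMod (24*m)) : chi0 (x + ((12*m:ℕ) : ZMod (24*m))) = chi0 x := by
  have hm := hm_pos (m := m)
  rw [chi0, chi0, val_add_nat x (show 12*m < 24*m by omega)]
  rw [show x.val + 12*m = x.val + 3*(4*m) by ring, Nat.add_mul_mod_self_right]

lemma mod_flip {r : ℕ} (hm : 0 < m) (hr : r < 4*m) :
    (r + 2*m) % (4*m) = if r < 2*m then r + 2*m else r - 2*m := by
  by_cases hlt : r < 2*m
  · rw [if_pos hlt, Nat.mod_eq_of_lt (by omega)]
  · rw [if_neg hlt, Nat.mod_eq_sub_mod (by omega),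
      show r + 2*m - 4*m = r - 2*m by omega, Nat.mod_eq_of_lt (by omega)]

lemma chi0_flip2 (x : ZMod (24*m)) :
    chi0 (x + ((2*m:ℕ) : ZMod (24*m))) = 0 ↔ ¬ chi0 x = 0 := by
  have hm := hm_pos (m := m)
  rw [chi0_eq_zero, chi0_eq_zero, val_add_nat x (show 2*m < 24*m by omega)]
  rw [Nat.add_mod, Nat.mod_eq_of_lt (show 2*m < 4*m by omega),
    mod_flip hm (Nat.mod_lt _ (by omega))]
  have := Nat.mod_lt x.val (show 0 < 4*m by omega)
  split <;> omega

lemma chi0_flip22 (x : ZMod (24*m)) :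
    chi0 (x + ((22*m:ℕ) : ZMod (24*m))) = 0 ↔ ¬ chi0 x = 0 := by
  have hm := hm_pos (m := m)
  rw [chi0_eq_zero, chi0_eq_zero, val_add_nat x (show 22*m < 24*m by omega)]
  rw [show x.val + 22*m = (x.val + 2*m) + 5*(4*m) by ring, Nat.add_mul_mod_self_right]
  rw [Nat.add_mod, Nat.mod_eq_of_lt (show 2*m < 4*m by omega),
    mod_flip hm (Nat.mod_lt _ (by omega))]
  have := Nat.mod_lt x.val (show 0 < 4*m by omega)
  split <;> omega

lemma cast224 : ((2*m:ℕ) : ZMod (24*m)) + ((22*m:ℕ) : ZMod (24*m)) = 0 := by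
  rw [← Nat.cast_add, show 2*m+22*m = 24*m by ring, castN]

lemma sum_e_chi0_zero (p : ZMod (24*m) → Prop) [DecidablePred p]
    (hp2 : ∀ x, p (x + ((2*m:ℕ) : ZMod (24*m))) ↔ p x)
    (hp22 : ∀ x, p (x + ((22*m:ℕ) : ZMod (24*m))) ↔ p x) :
    ∑ x ∈ univ.filter p, ee chi0 x = 0 := by
  classical
  rw [← Finset.sum_filter_add_sum_filter_not (univ.filter p) (fun x => chi0 x = 0)]
  have hA : ∀ x ∈ (univ.filter p).filter (fun x => chi0 x = 0), ee chi0 x = 1 := by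
    intro x hx; rw [mem_filter] at hx; rw [ee, if_pos hx.2]
  have hB : ∀ x ∈ (univ.filter p).filter (fun x => ¬ chi0 x = 0), ee chi0 x = -1 := by
    intro x hx; rw [mem_filter] at hx; rw [ee, if_neg hx.2]
  rw [Finset.sum_congr rfl hA, Finset.sum_congr rfl hB, Finset.sum_const, Finset.sum_const]
  have hcard : ((univ.filter p).filter (fun x => chi0 x = 0)).card
      = ((univ.filter p).filter (fun x => ¬ chi0 x = 0)).card := by
    apply Finset.card_nbij' (i := fun x => x + ((2*m:ℕ) : ZMod (24*m)))
      (j := fun x => x + ((22*m:ℕ) : ZMod (24*m)))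
    · intro x hx
      simp only [mem_coe, mem_filter, mem_univ, true_and] at hx ⊢
      exact ⟨(hp2 x).2 hx.1, fun hc => ((chi0_flip2 x).1 hc) hx.2⟩
    · intro x hx
      simp only [mem_coe, mem_filter, mem_univ, true_and] at hx ⊢
      refine ⟨(hp22 x).2 hx.1, ?_⟩
      by_contra hc
      exact hx.2 (by
        have := (chi0_flip22 x)
        rcases Decidable.em (chi0 x = 0) with h | h
        · exact h
        · exact absurd (this.2 h) hc)
    · intro x _
      dsimp only; rw [add_assoc, cast224, add_zero]
    · intro x _
      dsimp only; rw [add_assoc, add_comm ((22*m:ℕ) : ZMod (24*m)), cast224, add_zero]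
  rw [hcard]
  simp

lemma S_chi0 : S (chi0 (m := m)) = 0 := by
  have h : (univ : Finset (ZMod (24*m))) = univ.filter (fun _ => True) := by simp
  rw [S, h]
  exact sum_e_chi0_zero _ (fun x => by simp) (fun x => by simp)

lemma S0_chi0 : S0 (chi0 (m := m)) = 0 := by
  have hm := hm_pos (m := m)
  have h2 : ((2*m:ℕ) : ZMod (24*m)).val = 2*m := val_cm (by norm_num)
  have h22 : ((22*m:ℕ) : ZMod (24*m)).val = 22*m := val_cm (by norm_num)
  rw [S0, Ev]
  apply sum_e_chi0_zero
  · intro x; rw [parity_add, h2]; omega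
  · intro x; rw [parity_add, h22]; omega

lemma S1_chi0 : S1 (chi0 (m := m)) = 0 := by
  have hm := hm_pos (m := m)
  have h2 : ((2*m:ℕ) : ZMod (24*m)).val = 2*m := val_cm (by norm_num)
  have h22 : ((22*m:ℕ) : ZMod (24*m)).val = 22*m := val_cm (by norm_num)
  rw [S1, Od]
  apply sum_e_chi0_zero
  · intro x; rw [parity_add, h2]; omega
  · intro x; rw [parity_add, h22]; omega

lemma Pn_chi0 : Pn (chi0 (m := m)) = 24*m := by
  rw [Pn, Finset.filter_true_of_mem, card_univ, ZMod.card]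
  intro x _
  exact (chi0_per12 x).symm

lemma Bn_chi0 : 3 * (BadS (chi0 (m := m))).card = 24*m := by
  exact Bn_eq _ chi0_per8

lemma count_chi0 : (monoAPCount (24*m) (chi0 (m := m)) : ℤ) = 72*(m:ℤ)^2 - 40*(m:ℤ) := by
  have h := master (chi0 (m := m))
  rw [S_chi0, S0_chi0, S1_chi0, Pn_chi0] at h
  have hB : ((BadS (chi0 (m := m))).card : ℤ) = 8*m := by
    have := Bn_chi0 (m := m)
    have : (3:ℤ) * ((BadS (chi0 (m := m))).card : ℤ) = 24*m := by exact_mod_cast this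
    linarith
  rw [hB] at h
  push_cast at h
  nlinarith [h]

end withN
end AP17

theorem stmt_17 (n : ℕ) [NeZero n] (h24 : 24 ∣ n) :
    IsLeast {k : ℤ | ∃ χ : ZMod n → Fin 2, k = monoAPCount n χ}
      ((n : ℤ) ^ 2 / 8 - 5 * n / 3) := by
  obtain ⟨m, rfl⟩ := h24
  have hm := AP17.hm_pos (m := m)
  have hval : ((24*m : ℕ) : ℤ)^2 / 8 - 5 * ((24*m:ℕ) : ℤ) / 3 = 72*(m:ℤ)^2 - 40*m := by
    have h1 : ((24*m : ℕ) : ℤ) = 24*(m:ℤ) := by push_cast; ring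
    rw [h1]
    rw [show (24*(m:ℤ))^2 = 8 * (72*(m:ℤ)^2) by ring,
      show 5 * (24*(m:ℤ)) = 3 * (40*(m:ℤ)) by ring,
      Int.mul_ediv_cancel_left _ (by norm_num), Int.mul_ediv_cancel_left _ (by norm_num)]
  constructor
  · exact ⟨AP17.chi0, by rw [hval, AP17.count_chi0]⟩
  · rintro k ⟨χ, rfl⟩
    rw [hval]
    exact AP17.lower_bound χ
end

section
/- For every positive integer n, R(3, D_{2n}, 2) = 2·R(3, Z_n, 2), where R(3, G, 2) denotes the minimum over all 2-colorings of the group G of the number of monochromatic nondegenerate 3-term arithmetic progressions in G. -/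
open scoped Classical in
/-- The number of monochromatic nondegenerate 3-term arithmetic progressions
`{g, g*h, g*h^2}` (3-element sets, counted once) in a finite group `G`
under the 2-coloring `χ`. -/
noncomputable def groupMonoAPCount (G : Type*) [Group G] [Fintype G]
    (χ : G → Fin 2) : ℕ :=
  ((Finset.univ : Finset (Finset G)).filter (fun s =>
    (∃ g h : G, h ≠ 1 ∧ s = {g, g * h, g * h ^ 2}) ∧ s.card = 3 ∧
      ∀ x ∈ s, ∀ y ∈ s, χ x = χ y)).card

open DihedralGroup Finset in
open scoped Classical in
lemma dihedral_count_split (n : ℕ) [NeZero n] (χ : DihedralGroup n → Fin 2) :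
    groupMonoAPCount (DihedralGroup n) χ
      = groupMonoAPCount (Multiplicative (ZMod n)) (fun x => χ (r x.toAdd))
      + groupMonoAPCount (Multiplicative (ZMod n)) (fun x => χ (sr x.toAdd)) := by
  classical
  set Z := Multiplicative (ZMod n)
  set F₁ : Z → DihedralGroup n := fun x => r x.toAdd with hF₁def
  set F₂ : Z → DihedralGroup n := fun x => sr x.toAdd with hF₂def
  have hF₁ : Function.Injective F₁ := by
    intro x y h
    simpa [hF₁def, r.injEq] using h
  have hF₂ : Function.Injective F₂ := by
    intro x y h
    simpa [hF₂def, sr.injEq] using h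
  have himg₁ : ∀ g h : Z, ({g, g * h, g * h ^ 2} : Finset Z).image F₁
      = {F₁ g, F₁ g * r h.toAdd, F₁ g * (r h.toAdd) ^ 2} := by
    intro g h
    simp only [hF₁def, Finset.image_insert, Finset.image_singleton, pow_two, r_mul_r]
    rfl
  have himg₂ : ∀ g h : Z, ({g, g * h, g * h ^ 2} : Finset Z).image F₂
      = {F₂ g, F₂ g * r h.toAdd, F₂ g * (r h.toAdd) ^ 2} := by
    intro g h
    simp only [hF₂def, Finset.image_insert, Finset.image_singleton, pow_two, sr_mul_r, r_mul_r]
    rfl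
  have hr_ne : ∀ h : Z, h ≠ 1 → (r h.toAdd : DihedralGroup n) ≠ 1 := by
    intro h hh
    rw [one_def, ne_eq, r.injEq]
    simpa using hh
  unfold groupMonoAPCount
  have key : (Finset.univ.filter (fun s : Finset (DihedralGroup n) =>
      (∃ g h, h ≠ 1 ∧ s = {g, g * h, g * h ^ 2}) ∧ s.card = 3 ∧
        ∀ x ∈ s, ∀ y ∈ s, χ x = χ y))
      = ((Finset.univ.filter (fun s : Finset Z =>
      (∃ g h, h ≠ 1 ∧ s = {g, g * h, g * h ^ 2}) ∧ s.card = 3 ∧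
        ∀ x ∈ s, ∀ y ∈ s, χ (F₁ x) = χ (F₁ y))).image (Finset.image F₁))
      ∪ ((Finset.univ.filter (fun s : Finset Z =>
      (∃ g h, h ≠ 1 ∧ s = {g, g * h, g * h ^ 2}) ∧ s.card = 3 ∧
        ∀ x ∈ s, ∀ y ∈ s, χ (F₂ x) = χ (F₂ y))).image (Finset.image F₂)) := by
    ext s
    simp only [mem_union, mem_image, mem_filter, mem_univ, true_and]
    constructor
    · rintro ⟨⟨g, h, hne, rfl⟩, hcard, hmono⟩
      cases h with
      | sr j =>
        exfalso
        have hsq : (sr j : DihedralGroup n) ^ 2 = 1 := by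
          rw [pow_two, sr_mul_sr, sub_self, one_def]
        rw [hsq, mul_one] at hcard
        have hsub : ({g, g * sr j, g} : Finset (DihedralGroup n)) ⊆ {g, g * sr j} := by
          intro y hy
          simp only [mem_insert, mem_singleton] at hy ⊢
          tauto
        have h2 : ({g, g * sr j} : Finset (DihedralGroup n)).card ≤ 2 := by
          apply (card_insert_le _ _).trans
          simp
        have := (card_le_card hsub).trans h2
        omega
      | r d =>
        have hd : d ≠ 0 := by
          intro hd0
          exact hne (by rw [hd0, ← one_def])
        have hne' : (Multiplicative.ofAdd d : Z) ≠ 1 := by simpa using hd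
        cases g with
        | r a =>
          left
          refine ⟨{Multiplicative.ofAdd a, Multiplicative.ofAdd a * Multiplicative.ofAdd d,
            Multiplicative.ofAdd a * Multiplicative.ofAdd d ^ 2}, ⟨⟨_, _, hne', rfl⟩, ?_, ?_⟩, ?_⟩
          · rw [← Finset.card_image_of_injective _ hF₁, himg₁]
            exact hcard
          · intro x hx y hy
            have hx' := Finset.mem_image_of_mem F₁ hx
            have hy' := Finset.mem_image_of_mem F₁ hy
            rw [himg₁] at hx' hy'
            exact hmono _ hx' _ hy'
          · rw [himg₁]
            rfl
        | sr a =>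
          right
          refine ⟨{Multiplicative.ofAdd a, Multiplicative.ofAdd a * Multiplicative.ofAdd d,
            Multiplicative.ofAdd a * Multiplicative.ofAdd d ^ 2}, ⟨⟨_, _, hne', rfl⟩, ?_, ?_⟩, ?_⟩
          · rw [← Finset.card_image_of_injective _ hF₂, himg₂]
            exact hcard
          · intro x hx y hy
            have hx' := Finset.mem_image_of_mem F₂ hx
            have hy' := Finset.mem_image_of_mem F₂ hy
            rw [himg₂] at hx' hy'
            exact hmono _ hx' _ hy'
          · rw [himg₂]
            rfl
    · rintro (⟨t, ⟨⟨g, h, hne, rfl⟩, hcard, hmono⟩, rfl⟩ | ⟨t, ⟨⟨g, h, hne, rfl⟩, hcard, hmono⟩, rfl⟩)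
      · refine ⟨⟨F₁ g, r h.toAdd, hr_ne h hne, himg₁ g h⟩, ?_, ?_⟩
        · rw [Finset.card_image_of_injective _ hF₁]; exact hcard
        · intro x hx y hy
          obtain ⟨u, hu, rfl⟩ := Finset.mem_image.1 hx
          obtain ⟨v, hv, rfl⟩ := Finset.mem_image.1 hy
          exact hmono _ hu _ hv
      · refine ⟨⟨F₂ g, r h.toAdd, hr_ne h hne, himg₂ g h⟩, ?_, ?_⟩
        · rw [Finset.card_image_of_injective _ hF₂]; exact hcard
        · intro x hx y hy
          obtain ⟨u, hu, rfl⟩ := Finset.mem_image.1 hx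
          obtain ⟨v, hv, rfl⟩ := Finset.mem_image.1 hy
          exact hmono _ hu _ hv
  have hdisj : Disjoint
      ((Finset.univ.filter (fun s : Finset Z =>
      (∃ g h, h ≠ 1 ∧ s = {g, g * h, g * h ^ 2}) ∧ s.card = 3 ∧
        ∀ x ∈ s, ∀ y ∈ s, χ (F₁ x) = χ (F₁ y))).image (Finset.image F₁))
      ((Finset.univ.filter (fun s : Finset Z =>
      (∃ g h, h ≠ 1 ∧ s = {g, g * h, g * h ^ 2}) ∧ s.card = 3 ∧
        ∀ x ∈ s, ∀ y ∈ s, χ (F₂ x) = χ (F₂ y))).image (Finset.image F₂)) := by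
    rw [Finset.disjoint_left]
    rintro s hs₁ hs₂
    simp only [mem_image, mem_filter, mem_univ, true_and] at hs₁ hs₂
    obtain ⟨t₁, ⟨_, hc₁, _⟩, rfl⟩ := hs₁
    obtain ⟨t₂, ⟨_, hc₂, _⟩, ht⟩ := hs₂
    have hne : t₁.Nonempty := by
      rw [← Finset.card_pos, hc₁]; norm_num
    obtain ⟨x, hx⟩ := hne
    have hx₁ : F₁ x ∈ t₂.image F₂ := by rw [ht]; exact Finset.mem_image_of_mem _ hx
    obtain ⟨y, _, hy⟩ := Finset.mem_image.1 hx₁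
    simp [hF₁def, hF₂def] at hy
  have key' := congrArg Finset.card key
  rw [card_union_of_disjoint hdisj,
    Finset.card_image_of_injective _ (Finset.image_injective hF₁),
    Finset.card_image_of_injective _ (Finset.image_injective hF₂)] at key'
  simp only [hF₁def, hF₂def] at key'
  beta_reduce
  have hinst : (instDecidableEqDihedralGroup : DecidableEq (DihedralGroup n))
      = fun a b => Classical.propDecidable (a = b) := by
    funext a b
    exact Subsingleton.elim _ _
  have hinst2 : (instDecidableEqMultiplicative : DecidableEq Z)
      = fun a b => Classical.propDecidable (a = b) := by
    funext a b
    exact Subsingleton.elim _ _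
  rw [hinst, hinst2] at key'
  exact key'

theorem stmt_19 (n : ℕ) [NeZero n] :
    sInf {k : ℕ | ∃ χ : DihedralGroup n → Fin 2, k = groupMonoAPCount (DihedralGroup n) χ} =
      2 * sInf {k : ℕ |
        ∃ χ : Multiplicative (ZMod n) → Fin 2,
          k = groupMonoAPCount (Multiplicative (ZMod n)) χ} := by
  classical
  set S := {k : ℕ | ∃ χ : Multiplicative (ZMod n) → Fin 2,
      k = groupMonoAPCount (Multiplicative (ZMod n)) χ} with hS
  set T := {k : ℕ | ∃ χ : DihedralGroup n → Fin 2,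
      k = groupMonoAPCount (DihedralGroup n) χ} with hT
  have hSne : S.Nonempty := ⟨_, fun _ => 0, rfl⟩
  have hmem : sInf S ∈ S := Nat.sInf_mem hSne
  obtain ⟨χ₀, hχ₀⟩ := hmem
  -- the combined colouring
  set χD : DihedralGroup n → Fin 2 := fun g =>
    match g with
    | DihedralGroup.r i => χ₀ (Multiplicative.ofAdd i)
    | DihedralGroup.sr i => χ₀ (Multiplicative.ofAdd i) with hχD
  have h1 : (fun x : Multiplicative (ZMod n) => χD (DihedralGroup.r x.toAdd)) = χ₀ := by
    funext x; simp [hχD]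
  have h2 : (fun x : Multiplicative (ZMod n) => χD (DihedralGroup.sr x.toAdd)) = χ₀ := by
    funext x; simp [hχD]
  have hd : groupMonoAPCount (DihedralGroup n) χD
      = groupMonoAPCount (Multiplicative (ZMod n)) χ₀
        + groupMonoAPCount (Multiplicative (ZMod n)) χ₀ := by
    exact dihedral_count_split n χD
  have hTmem : 2 * sInf S ∈ T := by
    refine ⟨χD, ?_⟩
    rw [hd, ← hχ₀, two_mul]
  have hTne : T.Nonempty := ⟨_, hTmem⟩
  refine le_antisymm (Nat.sInf_le hTmem) ?_
  refine le_csInf hTne ?_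
  rintro k ⟨χ, rfl⟩
  rw [dihedral_count_split n χ, two_mul]
  have ha : sInf S ≤ groupMonoAPCount (Multiplicative (ZMod n))
      (fun x => χ (DihedralGroup.r x.toAdd)) := Nat.sInf_le ⟨_, rfl⟩
  have hb : sInf S ≤ groupMonoAPCount (Multiplicative (ZMod n))
      (fun x => χ (DihedralGroup.sr x.toAdd)) := Nat.sInf_le ⟨_, rfl⟩
  omega
end
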